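/- arXiv:1003.1984 — 8 statements merged into one kernel-verified Lean document; each statement's English description precedes it below -/
import Mathlib

section
/- For every finite field F with char F ≠ 2, there is no bijective map Φ : M_3(F) → M_3(F) satisfying per A = det Φ(A) for all A ∈ M_3(F). -/
/-!
A bijection `Φ` with `per = det ∘ Φ` maps the zeros of `per` onto the zeros of `det`, so it
suffices to show that `per` has fewer zeros than `det` on `M₃(F)`. Expanding along the first
row, `per A = A₀ ⬝ᵥ permCross A₁ A₂` and `det A = A₀ ⬝ᵥ (A₁ ⨯₃ A₂)`. For fixed `(A₁, A₂)` the
first row ranges over all of `F³` or over a plane according as the product vanishes or not, so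
the number of zeros increases strictly with the number of pairs `(v, w)` whose product
vanishes. For `v ≠ 0`, `v ⨯₃ w` vanishes on the whole line `F v`, while `permCross v w = 0`
confines `w` to a line, and even to `0` when `v = (1, 1, 1)` and `2 ≠ 0`.
-/

open Finset Matrix

def permCross {R : Type*} [CommSemiring R] (v w : Fin 3 → R) : Fin 3 → R :=
  ![v 1 * w 2 + v 2 * w 1, v 0 * w 2 + v 2 * w 0, v 0 * w 1 + v 1 * w 0]

theorem Matrix.permanent_fin_three_eq_dotProduct_permCross {R : Type*} [CommSemiring R]
    (A : Matrix (Fin 3) (Fin 3) R) : A.permanent = A 0 ⬝ᵥ permCross (A 1) (A 2) := by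
  have apply_two (p : Fin 3) (e : Equiv.Perm (Fin 2)) :
      Equiv.Perm.decomposeFin.symm (p, e) 2 = Equiv.swap 0 p (e 1).succ :=
    Equiv.Perm.decomposeFin_symm_apply_succ e p 1
  simp only [permanent, univ_perm_fin_succ, sum_map, Fintype.sum_prod_type,
    Fin.sum_univ_succ, Fin.prod_univ_succ]
  simp [permCross, dotProduct, Fin.sum_univ_succ, Equiv.swap_apply_def, apply_two]
  ring

theorem Matrix.det_fin_three_eq_dotProduct_cross {R : Type*} [CommRing R]
    (A : Matrix (Fin 3) (Fin 3) R) : A.det = A 0 ⬝ᵥ A 1 ⨯₃ A 2 := by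
  rw [triple_product_eq_det, ← FinVec.etaExpand_eq A]
  rfl

theorem eq_zero_of_permCross_one_eq_zero {R : Type*} [CommRing R] [NoZeroDivisors R]
    (h2 : (2 : R) ≠ 0) {w : Fin 3 → R} (hw : permCross 1 w = 0) : w = 0 := by
  have e0 : w 2 + w 1 = 0 := by simpa [permCross] using congrFun hw 0
  have e1 : w 2 + w 0 = 0 := by simpa [permCross] using congrFun hw 1
  have e2 : w 1 + w 0 = 0 := by simpa [permCross] using congrFun hw 2
  have hw0 : w 0 = 0 :=
    (mul_eq_zero.mp (by linear_combination e1 + e2 - e0 : (2 : R) * w 0 = 0)).resolve_left h2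
  have hw1 : w 1 = 0 := by linear_combination e2 - hw0
  have hw2 : w 2 = 0 := by linear_combination e1 - hw0
  ext j
  fin_cases j <;> simp [hw0, hw1, hw2]

section Field
variable {F : Type*} [Field F]

theorem exists_smul_eq_of_permCross_eq_zero {v : Fin 3 → F} (hv : v ≠ 0) :
    ∃ u : Fin 3 → F, ∀ w, permCross v w = 0 → ∃ c : F, c • u = w := by
  -- if `v i ≠ 0`, the two coordinates of `permCross v w` involving `v i` express `w` via `w i`
  obtain h | h | h : v 0 ≠ 0 ∨ v 1 ≠ 0 ∨ v 2 ≠ 0 := by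
    contrapose! hv
    ext i
    fin_cases i <;> simp [hv]
  · refine ⟨![v 0, -v 1, -v 2], fun w hw => ⟨w 0 / v 0, ?_⟩⟩
    have e1 : v 0 * w 2 + v 2 * w 0 = 0 := congrFun hw 1
    have e2 : v 0 * w 1 + v 1 * w 0 = 0 := congrFun hw 2
    ext j
    fin_cases j <;>
      simp only [Pi.smul_apply, smul_eq_mul, Fin.zero_eta, Fin.mk_one, Fin.reduceFinMk,
        cons_val_zero, cons_val_one, Matrix.cons_val, mul_neg] <;>
      field_simp
    · linear_combination -e2
    · linear_combination -e1
  · refine ⟨![-v 0, v 1, -v 2], fun w hw => ⟨w 1 / v 1, ?_⟩⟩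
    have e0 : v 1 * w 2 + v 2 * w 1 = 0 := congrFun hw 0
    have e2 : v 0 * w 1 + v 1 * w 0 = 0 := congrFun hw 2
    ext j
    fin_cases j <;>
      simp only [Pi.smul_apply, smul_eq_mul, Fin.zero_eta, Fin.mk_one, Fin.reduceFinMk,
        cons_val_zero, cons_val_one, Matrix.cons_val, mul_neg] <;>
      field_simp
    · linear_combination -e2
    · linear_combination -e0
  · refine ⟨![-v 0, -v 1, v 2], fun w hw => ⟨w 2 / v 2, ?_⟩⟩
    have e0 : v 1 * w 2 + v 2 * w 1 = 0 := congrFun hw 0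
    have e1 : v 0 * w 2 + v 2 * w 0 = 0 := congrFun hw 1
    ext j
    fin_cases j <;>
      simp only [Pi.smul_apply, smul_eq_mul, Fin.zero_eta, Fin.mk_one, Fin.reduceFinMk,
        cons_val_zero, cons_val_one, Matrix.cons_val, mul_neg] <;>
      field_simp
    · linear_combination -e1
    · linear_combination -e0

variable [Fintype F] [DecidableEq F]

theorem card_dotProduct_eq_zero {ι : Type*} [Fintype ι] [DecidableEq ι] {v : ι → F}
    (hv : v ≠ 0) : #{c : ι → F | c ⬝ᵥ v = 0} = Fintype.card F ^ (Fintype.card ι - 1) := by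
  set f := dotProductEquiv F ι v
  have hker : Module.finrank F (LinearMap.ker f) + 1 = Fintype.card ι := by
    rw [Module.Dual.finrank_ker_add_one_of_ne_zero ((LinearEquiv.map_ne_zero_iff _).mpr hv),
      Module.finrank_fintype_fun_eq_card]
  have e : {c : ι → F // c ⬝ᵥ v = 0} ≃ LinearMap.ker f :=
    Equiv.subtypeEquivRight fun c => by simp [f, dotProduct_comm]
  rw [← Fintype.card_subtype, ← Nat.card_eq_fintype_card, Nat.card_congr e,
    Module.natCard_eq_pow_finrank (K := F), Nat.card_eq_fintype_card, ← hker, Nat.add_sub_cancel]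

theorem card_fst_dotProduct_eq_zero {ι β : Type*} [Fintype ι] [DecidableEq ι] [Fintype β]
    (φ : β → ι → F) :
    #{p : (ι → F) × β | p.1 ⬝ᵥ φ p.2 = 0} = #{b | φ b = 0} * Fintype.card F ^ Fintype.card ι
      + #{b | φ b ≠ 0} * Fintype.card F ^ (Fintype.card ι - 1) := by
  have fiber (b : β) : #{c : ι → F | c ⬝ᵥ φ b = 0} = if φ b = 0
      then Fintype.card F ^ Fintype.card ι else Fintype.card F ^ (Fintype.card ι - 1) := by
    split_ifs with hb
    · simp [hb]
    · exact card_dotProduct_eq_zero hb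
  rw [card_filter, Fintype.sum_prod_type_right]
  simp only [← card_filter]
  simp only [fiber, sum_ite, sum_const, smul_eq_mul]

theorem card_fst_dotProduct_eq_zero_lt {ι β : Type*} [Fintype ι] [DecidableEq ι] [Nonempty ι]
    [Fintype β] {φ ψ : β → ι → F} (h : #{b | φ b = 0} < #{b | ψ b = 0}) :
    #{p : (ι → F) × β | p.1 ⬝ᵥ φ p.2 = 0} < #{p : (ι → F) × β | p.1 ⬝ᵥ ψ p.2 = 0} := by
  have hq : Fintype.card F ^ (Fintype.card ι - 1) < Fintype.card F ^ Fintype.card ι :=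
    pow_lt_pow_right₀ Fintype.one_lt_card (Nat.sub_lt Fintype.card_pos one_pos)
  have hφ : #{b | φ b = 0} + #{b | φ b ≠ 0} = Fintype.card β :=
    card_filter_add_card_filter_not _
  have hψ : #{b | ψ b = 0} + #{b | ψ b ≠ 0} = Fintype.card β :=
    card_filter_add_card_filter_not _
  rw [card_fst_dotProduct_eq_zero, card_fst_dotProduct_eq_zero]
  -- keep the truncated subtraction in the exponent away from `nlinarith`
  generalize Fintype.card F ^ (Fintype.card ι - 1) = x at hq ⊢
  nlinarith

theorem card_permCross_eq_zero_le {v : Fin 3 → F} (hv : v ≠ 0) :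
    #{w | permCross v w = 0} ≤ Fintype.card F := by
  obtain ⟨u, hu⟩ := exists_smul_eq_of_permCross_eq_zero hv
  calc #{w | permCross v w = 0} ≤ #(univ.image (· • u)) := by
        refine card_le_card fun w hw => ?_
        obtain ⟨c, rfl⟩ := hu w (mem_filter.mp hw).2
        exact mem_image_of_mem _ (mem_univ c)
    _ ≤ Fintype.card F := card_image_le

theorem card_le_card_cross_eq_zero {v : Fin 3 → F} (hv : v ≠ 0) :
    Fintype.card F ≤ #{w | v ⨯₃ w = 0} := by
  calc Fintype.card F = #(univ.image (· • v)) :=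
        (card_image_of_injective _ (smul_left_injective F hv)).symm
    _ ≤ #{w | v ⨯₃ w = 0} := by
        refine card_le_card fun w hw => ?_
        obtain ⟨c, -, rfl⟩ := mem_image.mp hw
        simp [cross_self]

theorem card_permCross_eq_zero_lt_card_cross_eq_zero (h2 : (2 : F) ≠ 0) :
    #{p : (Fin 3 → F) × (Fin 3 → F) | permCross p.1 p.2 = 0}
      < #{p : (Fin 3 → F) × (Fin 3 → F) | p.1 ⨯₃ p.2 = 0} := by
  simp only [card_filter, Fintype.sum_prod_type]
  simp only [← card_filter]
  refine sum_lt_sum (fun v _ => ?_) ⟨1, mem_univ _, ?_⟩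
  · by_cases hv : v = 0
    · subst hv
      exact (card_le_univ _).trans (by simp)
    · exact (card_permCross_eq_zero_le hv).trans (card_le_card_cross_eq_zero hv)
  · calc #{w | permCross 1 w = 0} ≤ 1 := card_le_one.mpr fun w hw w' hw' => by
          rw [eq_zero_of_permCross_one_eq_zero h2 (mem_filter.mp hw).2,
            eq_zero_of_permCross_one_eq_zero h2 (mem_filter.mp hw').2]
      _ < Fintype.card F := Fintype.one_lt_card
      _ ≤ _ := card_le_card_cross_eq_zero one_ne_zero

end Field

theorem card_permanent_eq_zero_lt_card_det_eq_zero {F : Type*} [Field F] [Fintype F]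
    (h2 : (2 : F) ≠ 0) :
    Nat.card {A : Matrix (Fin 3) (Fin 3) F // A.permanent = 0}
      < Nat.card {A : Matrix (Fin 3) (Fin 3) F // A.det = 0} := by
  classical
  let rows : Matrix (Fin 3) (Fin 3) F ≃ (Fin 3 → F) × (Fin 3 → F) × (Fin 3 → F) :=
    (Fin.consEquiv _).symm.trans ((Equiv.refl _).prodCongr (piFinTwoEquiv _))
  have count (g : (Fin 3 → F) → (Fin 3 → F) → Fin 3 → F) :
      Nat.card {A : Matrix (Fin 3) (Fin 3) F // A 0 ⬝ᵥ g (A 1) (A 2) = 0}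
        = #{p : (Fin 3 → F) × (Fin 3 → F) × (Fin 3 → F) | p.1 ⬝ᵥ g p.2.1 p.2.2 = 0} := by
    rw [← Fintype.card_subtype, ← Nat.card_eq_fintype_card]
    exact Nat.card_congr (rows.subtypeEquiv fun A => Iff.rfl)
  calc Nat.card {A : Matrix (Fin 3) (Fin 3) F // A.permanent = 0}
      = #{p : (Fin 3 → F) × (Fin 3 → F) × (Fin 3 → F) | p.1 ⬝ᵥ permCross p.2.1 p.2.2 = 0} := by
        simp only [permanent_fin_three_eq_dotProduct_permCross]
        exact count permCross
    -- `(e :)` elaborates `e` before unifying, avoiding higher-order unification for `φ` and `ψ`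
    _ < #{p : (Fin 3 → F) × (Fin 3 → F) × (Fin 3 → F) | p.1 ⬝ᵥ p.2.1 ⨯₃ p.2.2 = 0} :=
        (card_fst_dotProduct_eq_zero_lt (card_permCross_eq_zero_lt_card_cross_eq_zero h2) :)
    _ = Nat.card {A : Matrix (Fin 3) (Fin 3) F // A.det = 0} := by
        simp only [det_fin_three_eq_dotProduct_cross]
        exact (count fun v w => v ⨯₃ w).symm

/-- For every finite field `F` with `char F ≠ 2`, no bijective map
`Φ : M₃(F) → M₃(F)` satisfies `per A = det (Φ A)` for all `A`. -/
theorem no_bijective_permanent_to_determinant_converter_three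
    (F : Type) [Field F] [Fintype F] (hch : ringChar F ≠ 2) :
    ¬ ∃ Φ : Matrix (Fin 3) (Fin 3) F → Matrix (Fin 3) (Fin 3) F,
        Function.Bijective Φ ∧ ∀ A, A.permanent = (Φ A).det := by
  rintro ⟨Φ, hΦ, hper⟩
  have hcard : Nat.card {A : Matrix (Fin 3) (Fin 3) F // A.permanent = 0}
      = Nat.card {B : Matrix (Fin 3) (Fin 3) F // B.det = 0} :=
    Nat.card_congr ((Equiv.ofBijective Φ hΦ).subtypeEquiv fun A => by rw [hper]; rfl)
  exact (card_permanent_eq_zero_lt_card_det_eq_zero (Ring.two_ne_zero hch)).ne hcard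
end

section
/- Let F be a finite field with char F ≠ 2 and |F| = q. Then the number of 3×3 matrices over F with zero permanent is |P_3(F)| = q⁹ − (q³−1)(q³−q)(q³−q²) − q²(q−1)⁵. -/
/-!
Expanding along the first row, `per A = v ⬝ᵥ c(B)`, where `v` is the first row of `A`, `B` its
other two rows and `c(B)` the vector of `2 × 2` permanents of `B`. For fixed `B` the first rows
with `per A = 0` form a hyperplane (`q²` vectors) unless `c(B) = 0`, when all `q³` vectors qualify;
hence `|P₃(F)| = q² q⁶ + (q³ - q²) N` with `N = #{B | c(B) = 0}`.

Writing `B = (b, c)`, the conditions `b i * c j + b j * c i = 0` (`i ≠ j`) have `q³` solutions `c`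
when `b = 0`, only `c = 0` when no `b i` vanishes (as `2 ≠ 0`), and otherwise exactly the multiples
of `b` with one nonzero coordinate negated. So `N = q⁴ + q³ - q - (q - 1)⁴`.
-/

open Finset Matrix

namespace Matrix

variable {n R : Type*} [Fintype n] [DecidableEq n] [CommSemiring R]

theorem permanent_eq_sum_mul_permanent_updateCol_single (A : Matrix n n R) (k : n) :
    A.permanent = ∑ i, A i k * (A.updateCol k (Pi.single i 1)).permanent := by
  have hprod (σ : Equiv.Perm n) (i : n) : ∏ j, A.updateCol k (Pi.single i 1) (σ j) j =
      (Pi.single i 1 : n → R) (σ k) * ∏ j ∈ univ.erase k, A (σ j) j := by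
    rw [← Finset.mul_prod_erase univ _ (mem_univ k), updateCol_self]
    congr 1
    exact Finset.prod_congr rfl fun j hj => updateCol_ne (Finset.ne_of_mem_erase hj)
  simp only [permanent, Finset.mul_sum, hprod, Pi.single_apply, ite_mul, one_mul, zero_mul,
    mul_ite, mul_zero]
  rw [Finset.sum_comm]
  refine Finset.sum_congr rfl fun σ _ => ?_
  rw [Finset.sum_ite_eq, if_pos (mem_univ _)]
  exact (Finset.mul_prod_erase univ (fun j => A (σ j) j) (mem_univ k)).symm

theorem permanent_eq_sum_mul_permanent_updateRow_single (A : Matrix n n R) (k : n) :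
    A.permanent = ∑ j, A k j * (A.updateRow k (Pi.single j 1)).permanent := by
  rw [← permanent_transpose, permanent_eq_sum_mul_permanent_updateCol_single Aᵀ k]
  simp only [transpose_apply, updateCol_transpose, permanent_transpose]

theorem permanent_fin_three (A : Matrix (Fin 3) (Fin 3) R) :
    A.permanent = A 0 0 * A 1 1 * A 2 2 + A 1 0 * A 0 1 * A 2 2 + A 2 0 * A 1 1 * A 0 2
      + A 0 0 * A 2 1 * A 1 2 + A 1 0 * A 2 1 * A 0 2 + A 2 0 * A 0 1 * A 1 2 := by
  simp only [permanent, ← Equiv.Perm.decomposeFin.symm.sum_comp, Fintype.sum_prod_type,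
    Fin.sum_univ_succ, Fin.prod_univ_succ, Fin.sum_univ_zero, Fin.prod_univ_zero,
    Equiv.Perm.decomposeFin_symm_apply_zero, Equiv.Perm.decomposeFin_symm_apply_succ]
  simp [Equiv.swap_apply_def]
  ring

end Matrix

section Cofactor

variable {R : Type*} [CommSemiring R]

/-- `B` lists the rows below the first one; `permCofactor B j` is the permanent of the minor at
position `(0, j)`. -/
def permCofactor {n : ℕ} (B : Fin n → Fin (n + 1) → R) : Fin (n + 1) → R :=
  fun j => (of (vecCons (Pi.single j 1) B)).permanent

theorem permanent_of_vecCons {n : ℕ} (v : Fin (n + 1) → R) (B : Fin n → Fin (n + 1) → R) :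
    (of (vecCons v B)).permanent = v ⬝ᵥ permCofactor B := by
  rw [permanent_eq_sum_mul_permanent_updateRow_single _ 0, dotProduct]
  refine Finset.sum_congr rfl fun j _ => ?_
  have hrow : (of (vecCons v B)).updateRow 0 (Pi.single j 1) = of (vecCons (Pi.single j 1) B) :=
    congrArg of (Fin.update_cons_zero (α := fun _ => Fin (n + 1) → R) _ _ _)
  rw [hrow]
  rfl

theorem permCofactor_fin_two (B : Fin 2 → Fin 3 → R) :
    permCofactor B = ![B 0 1 * B 1 2 + B 0 2 * B 1 1, B 0 0 * B 1 2 + B 0 2 * B 1 0,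
      B 0 0 * B 1 1 + B 0 1 * B 1 0] := by
  ext j
  fin_cases j <;> simp [permCofactor, permanent_fin_three] <;> ring

def PermMinorsVanish {ι : Type*} (b c : ι → R) : Prop :=
  ∀ i j, i ≠ j → b i * c j + b j * c i = 0

theorem permCofactor_eq_zero_iff (B : Fin 2 → Fin 3 → R) :
    permCofactor B = 0 ↔ PermMinorsVanish (B 0) (B 1) := by
  rw [permCofactor_fin_two, PermMinorsVanish]
  simp only [funext_iff, Fin.forall_fin_succ, Pi.zero_apply, IsEmpty.forall_iff, ne_eq,
    Fin.succ_zero_eq_one, Fin.succ_one_eq_two, Fin.succ_ne_zero, cons_val_zero, cons_val_succ,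
    cons_val_fin_one, Fin.isValue, Fin.reduceEq, not_true_eq_false, not_false_eq_true,
    zero_ne_one, forall_const, true_and, and_true]
  rw [add_comm (B 0 1 * B 1 0), add_comm (B 0 2 * B 1 0), add_comm (B 0 2 * B 1 1)]
  tauto

end Cofactor

section PermMinorsVanish

variable {R : Type*} [CommRing R] [NoZeroDivisors R]

theorem PermMinorsVanish.apply_eq_zero {ι : Type*} {b c : ι → R} (h : PermMinorsVanish b c)
    (h2 : (2 : R) ≠ 0) {l m k : ι} (hlm : l ≠ m) (hlk : l ≠ k) (hmk : m ≠ k)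
    (hm : b m ≠ 0) (hk : b k ≠ 0) : c l = 0 := by
  have key : 2 * b m * b k * c l = 0 := by
    linear_combination b k * h l m hlm + b m * h l k hlk - b l * h m k hmk
  simpa [h2, hm, hk] using key

theorem PermMinorsVanish.eq_zero {b c : Fin 3 → R} (h : PermMinorsVanish b c)
    (h2 : (2 : R) ≠ 0) (hb : ∀ i, b i ≠ 0) : c = 0 := by
  funext l
  obtain ⟨m, k, hlm, hlk, hmk⟩ : ∃ m k : Fin 3, l ≠ m ∧ l ≠ k ∧ m ≠ k := by
    revert l; decide
  exact h.apply_eq_zero h2 hlm hlk hmk (hb m) (hb k)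

end PermMinorsVanish

section Counting

variable {F : Type*} [Field F] [Fintype F]

local notation "q" => Fintype.card F

theorem card_dotProduct_eq_zero_mul_card {ι : Type*} [Fintype ι] {w : ι → F} (hw : w ≠ 0) :
    Nat.card {v : ι → F // v ⬝ᵥ w = 0} * q = q ^ Fintype.card ι := by
  classical
  let f : (ι → F) →+ F :=
    { toFun := (· ⬝ᵥ w), map_zero' := zero_dotProduct w, map_add' := (add_dotProduct · · w) }
  obtain ⟨j, hj⟩ : ∃ j, w j ≠ 0 := Function.ne_iff.mp hw
  have hf : Function.Surjective f := fun x =>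
    ⟨Pi.single j (x / w j), by simp [f, single_dotProduct, hj]⟩
  have := f.ker.card_mul_index
  rw [AddSubgroup.index_ker, AddMonoidHom.range_eq_top.mpr hf, AddSubgroup.card_top,
    Nat.card_fun] at this
  rwa [← Nat.card_eq_fintype_card, ← Nat.card_eq_fintype_card]

theorem card_dotProduct_eq_zero_s5 [DecidableEq F] {n : ℕ} (w : Fin (n + 1) → F) :
    Nat.card {v : Fin (n + 1) → F // v ⬝ᵥ w = 0} = if w = 0 then q ^ (n + 1) else q ^ n := by
  split_ifs with hw
  · simp [hw, Nat.card_eq_fintype_card]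
  · have := card_dotProduct_eq_zero_mul_card hw
    rw [Fintype.card_fin, pow_succ] at this
    exact Nat.eq_of_mul_eq_mul_right Fintype.card_pos this

theorem card_permanent_eq_zero_fin_succ (n : ℕ) :
    (Nat.card {A : Matrix (Fin (n + 1)) (Fin (n + 1)) F // A.permanent = 0} : ℤ) =
      q ^ n * q ^ ((n + 1) * n) + ((q : ℤ) ^ (n + 1) - q ^ n) *
        Nat.card {B : Fin n → Fin (n + 1) → F // permCofactor B = 0} := by
  classical
  have hsplit : {A : Matrix (Fin (n + 1)) (Fin (n + 1)) F // A.permanent = 0} ≃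
      Σ B : Fin n → Fin (n + 1) → F, {v : Fin (n + 1) → F // v ⬝ᵥ permCofactor B = 0} :=
    (((Equiv.prodComm _ _).trans (Fin.consEquiv fun _ => Fin (n + 1) → F)).subtypeEquiv
      fun p => by rw [← permanent_of_vecCons]; rfl).symm.trans
      (Equiv.subtypeProdEquivSigmaSubtype fun B v => v ⬝ᵥ permCofactor B = 0)
  have htotal := Finset.card_filter_add_card_filter_not (s := univ)
    fun B : Fin n → Fin (n + 1) → F => permCofactor B = 0
  rw [card_univ, Fintype.card_fun, Fintype.card_fun, Fintype.card_fin, Fintype.card_fin]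
    at htotal
  rw [Nat.card_congr hsplit, Nat.card_sigma]
  simp only [card_dotProduct_eq_zero_s5]
  rw [Finset.sum_ite, Finset.sum_const, Finset.sum_const, smul_eq_mul, smul_eq_mul,
    Nat.card_eq_fintype_card, Fintype.card_subtype]
  have htotal' := congrArg (Nat.cast : ℕ → ℤ) htotal
  push_cast at htotal' ⊢
  linear_combination (q : ℤ) ^ n * htotal'

theorem card_permMinorsVanish_of_apply_eq_zero {b : Fin 3 → F} {i j : Fin 3} (hi : b i = 0)
    (hj : b j ≠ 0) : Nat.card {c // PermMinorsVanish b c} = q := by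
  have hij : i ≠ j := fun h => hj (h ▸ hi)
  have third : ∀ i j : Fin 3, i ≠ j → ∃ k, k ≠ i ∧ k ≠ j ∧ ∀ l, l = i ∨ l = j ∨ l = k := by
    decide
  obtain ⟨k, hki, hkj, hcover⟩ := third i j hij
  set v : Fin 3 → F := Function.update b k (-b k) with hv
  have hvi : v i = 0 := by rw [hv, Function.update_of_ne hki.symm, hi]
  have hvj : v j = b j := by rw [hv, Function.update_of_ne hkj.symm]
  have hvk : v k = -b k := by rw [hv, Function.update_self]
  have hline (t : F) : PermMinorsVanish b (t • v) := by
    intro l m hlm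
    simp only [Pi.smul_apply, smul_eq_mul]
    rcases hcover l with rfl | rfl | rfl <;> rcases hcover m with rfl | rfl | rfl <;>
      first | exact absurd rfl hlm | (simp only [hi, hvi, hvj, hvk]; ring)
  have hmem {c : Fin 3 → F} (hc : PermMinorsVanish b c) : c = (c j / b j) • v := by
    have hci : b j * c i = 0 := by simpa [hi] using hc i j hij
    have hck : b j * c k + b k * c j = 0 := hc j k hkj.symm
    funext l
    simp only [Pi.smul_apply, smul_eq_mul]
    rcases hcover l with rfl | rfl | rfl
    · rw [hvi, mul_zero]; exact (mul_eq_zero.mp hci).resolve_left hj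
    · rw [hvj, div_mul_cancel₀ _ hj]
    · rw [hvk]; field_simp; linear_combination hck
  have e : {c // PermMinorsVanish b c} ≃ F :=
    { toFun := fun c => c.1 j / b j
      invFun := fun t => ⟨t • v, hline t⟩
      left_inv := fun c => Subtype.ext (hmem c.2).symm
      right_inv := fun t => by simp [hvj, hj] }
  rw [Nat.card_congr e, Nat.card_eq_fintype_card]

theorem card_permMinorsVanish [DecidableEq F] (h2 : (2 : F) ≠ 0) (b : Fin 3 → F) :
    Nat.card {c // PermMinorsVanish b c} =
      if b = 0 then q ^ 3 else if ∀ i, b i ≠ 0 then 1 else q := by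
  split_ifs with hb0 hb
  · simp [hb0, PermMinorsVanish, Nat.card_eq_fintype_card]
  · exact Nat.card_eq_one_iff_exists.mpr
      ⟨⟨0, fun i j _ => by simp⟩, fun c => Subtype.ext (c.2.eq_zero h2 hb)⟩
  · obtain ⟨i, hi⟩ : ∃ i, b i = 0 := by simpa using hb
    obtain ⟨j, hj⟩ : ∃ j, b j ≠ 0 := Function.ne_iff.mp hb0
    exact card_permMinorsVanish_of_apply_eq_zero hi hj

theorem card_forall_apply_ne_zero (ι : Type*) [Fintype ι] :
    Nat.card {b : ι → F // ∀ i, b i ≠ 0} = (q - 1) ^ Fintype.card ι := by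
  rw [Nat.card_congr (Equiv.subtypePiEquivPi (p := fun (_ : ι) (x : F) => x ≠ 0)), Nat.card_fun,
    ← Nat.card_congr unitsEquivNeZero, Nat.card_units, Nat.card_eq_fintype_card,
    Nat.card_eq_fintype_card]

theorem card_permCofactor_eq_zero_fin_two (h2 : (2 : F) ≠ 0) :
    (Nat.card {B : Fin 2 → Fin 3 → F // permCofactor B = 0} : ℤ) =
      q ^ 4 + q ^ 3 - q - ((q : ℤ) - 1) ^ 4 := by
  classical
  have hsplit : {B : Fin 2 → Fin 3 → F // permCofactor B = 0} ≃
      Σ b : Fin 3 → F, {c // PermMinorsVanish b c} :=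
    ((piFinTwoEquiv fun _ => Fin 3 → F).subtypeEquiv permCofactor_eq_zero_iff).trans
      (Equiv.subtypeProdEquivSigmaSubtype fun b c => PermMinorsVanish b c)
  have hterm (b : Fin 3 → F) :
      (((if b = 0 then q ^ 3 else if ∀ i, b i ≠ 0 then 1 else q : ℕ)) : ℤ) =
        q + (if b = 0 then (q : ℤ) ^ 3 - q else 0) + (if ∀ i, b i ≠ 0 then 1 - (q : ℤ) else 0) := by
    split_ifs with h0 h1 h1
    · exact absurd (congrFun h0 0) (h1 0)
    all_goals push_cast; ring
  have hfilter : #{b : Fin 3 → F | ∀ i, b i ≠ 0} = (q - 1) ^ 3 := by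
    have h := card_forall_apply_ne_zero (F := F) (Fin 3)
    rwa [Nat.card_eq_fintype_card, Fintype.card_subtype, Fintype.card_fin] at h
  rw [Nat.card_congr hsplit, Nat.card_sigma, Nat.cast_sum]
  simp only [card_permMinorsVanish h2, hterm]
  rw [Finset.sum_add_distrib, Finset.sum_add_distrib, Finset.sum_const, Finset.sum_ite_eq',
    if_pos (mem_univ 0), ← Finset.sum_filter, Finset.sum_const, hfilter, card_univ,
    Fintype.card_fun, Fintype.card_fin, nsmul_eq_mul, nsmul_eq_mul, Nat.cast_pow, Nat.cast_pow,
    Nat.cast_sub Fintype.card_pos, Nat.cast_one]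
  ring

end Counting

/-- For a finite field `F` with `char F ≠ 2` and `|F| = q`, the number of `3×3`
matrices over `F` with zero permanent is
`|P₃(F)| = q⁹ − (q³−1)(q³−q)(q³−q²) − q²(q−1)⁵`. -/
theorem card_permanent_zero_three_formula (F : Type) [Field F] [Fintype F]
    (hch : ringChar F ≠ 2) :
    (Nat.card {A : Matrix (Fin 3) (Fin 3) F // A.permanent = 0} : ℤ) =
      (Fintype.card F : ℤ) ^ 9
        - ((Fintype.card F : ℤ) ^ 3 - 1) * ((Fintype.card F : ℤ) ^ 3 - (Fintype.card F : ℤ))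
            * ((Fintype.card F : ℤ) ^ 3 - (Fintype.card F : ℤ) ^ 2)
        - (Fintype.card F : ℤ) ^ 2 * ((Fintype.card F : ℤ) - 1) ^ 5 := by
  have hcount := card_permanent_eq_zero_fin_succ (F := F) 2
  simp only [Nat.reduceAdd] at hcount
  rw [hcount, card_permCofactor_eq_zero_fin_two (Ring.two_ne_zero hch)]
  ring
end

section
/- Let F be a finite field with |F| = q, let k ≥ 2 be an integer, and let A ∈ M_k(F) have rank r. Then the set V = {(x, y) ∈ F^k × F^k : xᵀ A y = 0} has cardinality |V| = q^{2(k−r)} ((q^r − 1) q^{r−1} + q^r). -/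
/-!
Fix `x` and count the `y` with `(xᵀA) ⬝ y = 0`. If `xᵀA = 0` every `y` qualifies; otherwise
`y ↦ (xᵀA) ⬝ y` is a nonzero linear functional, whose kernel is a hyperplane. The `x` with
`xᵀA = 0` form the left kernel of `A`, of dimension `k - r`, so the count is
`q^(k-r) q^k + (q^k - q^(k-r)) q^(k-1)`, which rearranges to the stated formula.
-/

open Matrix Module Finset

namespace LinearMap

variable {K V W : Type*} [DivisionRing K] [AddCommGroup V] [Module K V] [Module.Finite K V]
  [AddCommGroup W] [Module K W]

theorem natCard_ker_eq_pow (f : V →ₗ[K] W) :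
    Nat.card (ker f) = Nat.card K ^ (finrank K V - finrank K (range f)) := by
  rw [natCard_eq_pow_finrank (K := K), ← f.finrank_range_add_finrank_ker, Nat.add_sub_cancel_left]

end LinearMap

namespace Matrix

variable {F m n : Type*} [Field F] [Fintype m] [Fintype n]

theorem natCard_dotProduct_eq_zero {v : n → F} (hv : v ≠ 0) :
    Nat.card {y : n → F // v ⬝ᵥ y = 0} = Nat.card F ^ (Fintype.card n - 1) := by
  classical
  set f := dotProductEquiv F n v
  have hf : f ≠ 0 := (map_ne_zero_iff _ (dotProductEquiv F n).injective).mpr hv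
  change Nat.card (LinearMap.ker f) = _
  rw [f.natCard_ker_eq_pow, Dual.range_eq_top_of_ne_zero hf, finrank_top, finrank_self,
    finrank_fintype_fun_eq_card]

theorem natCard_vecMul_eq_zero (A : Matrix m n F) :
    Nat.card {x : m → F // x ᵥ* A = 0} = Nat.card F ^ (Fintype.card m - A.rank) := by
  change Nat.card (LinearMap.ker A.vecMulLinear) = _
  rw [A.vecMulLinear.natCard_ker_eq_pow, finrank_fintype_fun_eq_card, ← A.rank_transpose, rank,
    mulVecLin_transpose]

theorem natCard_dotProduct_mulVec_eq_zero [Finite F] (A : Matrix m n F) :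
    Nat.card {p : (m → F) × (n → F) // p.1 ⬝ᵥ A *ᵥ p.2 = 0} =
      Nat.card F ^ (Fintype.card m - A.rank) * Nat.card F ^ Fintype.card n +
        (Nat.card F ^ Fintype.card m - Nat.card F ^ (Fintype.card m - A.rank)) *
          Nat.card F ^ (Fintype.card n - 1) := by
  classical
  have := Fintype.ofFinite F
  have hfiber (x : m → F) : Nat.card {y : n → F // (x ᵥ* A) ⬝ᵥ y = 0} =
      if x ᵥ* A = 0 then Nat.card F ^ Fintype.card n else Nat.card F ^ (Fintype.card n - 1) := by
    split_ifs with hx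
    · simp [hx]
    · exact natCard_dotProduct_eq_zero hx
  have hker := natCard_vecMul_eq_zero A
  rw [Nat.card_eq_fintype_card, Fintype.card_subtype] at hker
  have hcompl : #{x : m → F | x ᵥ* A ≠ 0} =
      Nat.card F ^ Fintype.card m - Nat.card F ^ (Fintype.card m - A.rank) := by
    rw [filter_not, card_sdiff_of_subset (filter_subset _ _), hker,
      card_univ, ← Nat.card_eq_fintype_card, Nat.card_fun, Nat.card_eq_fintype_card (α := m)]
  rw [Nat.card_congr (Equiv.subtypeProdEquivSigmaSubtype fun x y => x ⬝ᵥ A *ᵥ y = 0),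
    Nat.card_sigma]
  simp only [dotProduct_mulVec, hfiber, sum_ite, sum_const, smul_eq_mul, hker,
    ← ne_eq, hcompl]

end Matrix

theorem Nat.pow_sub_mul_pow_add_sub_mul_pow_pred_eq {q k r : ℕ} (hq : 0 < q) (hr : r ≤ k) :
    q ^ (k - r) * q ^ k + (q ^ k - q ^ (k - r)) * q ^ (k - 1) =
      q ^ (2 * (k - r)) * ((q ^ r - 1) * q ^ (r - 1) + q ^ r) := by
  obtain ⟨s, rfl⟩ := Nat.exists_eq_add_of_le hr
  rcases r with _ | t
  · simp [two_mul, pow_add]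
  · have h1 : q ^ s ≤ q ^ (t + 1 + s) := Nat.pow_le_pow_right hq (by omega)
    have h2 : 1 ≤ q ^ (t + 1) := Nat.one_le_pow _ _ hq
    simp only [Nat.add_sub_cancel_left, show t + 1 + s - 1 = t + s by omega, Nat.add_sub_cancel]
    zify [h1, h2]
    ring

theorem card_bilinear_zero_pairs_general (F : Type) [Field F] [Fintype F]
    (k : ℕ) (A : Matrix (Fin k) (Fin k) F) (r : ℕ) (hr : A.rank = r) :
    Nat.card {p : (Fin k → F) × (Fin k → F) // dotProduct p.1 (A.mulVec p.2) = 0} =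
      Fintype.card F ^ (2 * (k - r)) *
        ((Fintype.card F ^ r - 1) * Fintype.card F ^ (r - 1) + Fintype.card F ^ r) := by
  have hrk : r ≤ k := hr ▸ A.rank_le_width
  rw [A.natCard_dotProduct_mulVec_eq_zero, Fintype.card_fin, hr, Nat.card_eq_fintype_card]
  exact Nat.pow_sub_mul_pow_add_sub_mul_pow_pred_eq Fintype.card_pos hrk

/-- Let `F` be a finite field with `|F| = q`, `k ≥ 2`, and let `A ∈ M_k(F)` have
rank `r`. Then `|{(x,y) ∈ Fᵏ × Fᵏ : xᵀ A y = 0}| = q^{2(k−r)}((qʳ − 1) q^{r−1} + qʳ)`. -/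
theorem card_bilinear_zero_pairs (F : Type) [Field F] [Fintype F]
    (k : ℕ) (hk : 2 ≤ k) (A : Matrix (Fin k) (Fin k) F) (r : ℕ) (hr : A.rank = r) :
    Nat.card {p : (Fin k → F) × (Fin k → F) // dotProduct p.1 (A.mulVec p.2) = 0} =
      Fintype.card F ^ (2 * (k - r)) *
        ((Fintype.card F ^ r - 1) * Fintype.card F ^ (r - 1) + Fintype.card F ^ r) :=
  card_bilinear_zero_pairs_general F k A r hr
end

section
/- Let q ≥ 2 and k ≥ 2 be integers. Then the function r ↦ q^{2(k−r)} ((q^r − 1) q^{r−1} + q^r) is strictly decreasing in r on the integers 0 ≤ r ≤ k. Equivalently, for matrices A, B ∈ M_k(F) over a finite field F with rank A < rank B, the set {(x,y) ∈ F^k × F^k : xᵀ A y = 0} has strictly larger cardinality than {(x,y) ∈ F^k × F^k : xᵀ B y = 0}. -/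
/-!
Fibre the pairs over `x`: if `xᵀ A = 0` every `y` works, otherwise `y` ranges over the hyperplane
`(xᵀ A) ⬝ᵥ y = 0`. With `a = q^(k-r)` the size of the left kernel of `A`, the count is
`a q^k + (q^k - a) q^(k-1) = q^(2k-1) + a (q^k - q^(k-1))`, which is the stated formula and
grows strictly with `a`, hence decreases strictly with `r`.
-/

def zeroPairCount (q m n r : ℕ) : ℕ :=
  q ^ (m - r) * q ^ n + (q ^ m - q ^ (m - r)) * q ^ (n - 1)

open Matrix Module

section FiniteField

variable {F : Type*} [Field F] [Fintype F]

theorem LinearMap.natCard_ker_eq_pow_s9 {V W : Type*} [AddCommGroup V] [Module F V]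
    [FiniteDimensional F V] [AddCommGroup W] [Module F W] (f : V →ₗ[F] W) :
    Nat.card (LinearMap.ker f) = Fintype.card F ^ (finrank F V - finrank F (LinearMap.range f)) := by
  rw [natCard_eq_pow_finrank (K := F), Nat.card_eq_fintype_card, ← f.finrank_range_add_finrank_ker,
    Nat.add_sub_cancel_left]

variable {m n : Type*} [Fintype m] [Fintype n]

theorem Matrix.natCard_dotProduct_eq_zero_s9 [DecidableEq n] {c : n → F} (hc : c ≠ 0) :
    Nat.card {y : n → F // c ⬝ᵥ y = 0} = Fintype.card F ^ (Fintype.card n - 1) := by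
  have hf : dotProductEquiv F n c ≠ 0 := (LinearEquiv.map_ne_zero_iff _).mpr hc
  have := (dotProductEquiv F n c).natCard_ker_eq_pow_s9
  rw [Dual.range_eq_top_of_ne_zero hf, finrank_top, finrank_self,
    finrank_fintype_fun_eq_card] at this
  simpa [LinearMap.mem_ker] using this

theorem Matrix.natCard_vecMul_eq_zero_s9 (A : Matrix m n F) :
    Nat.card {x : m → F // x ᵥ* A = 0} = Fintype.card F ^ (Fintype.card m - A.rank) := by
  have := Aᵀ.mulVecLin.natCard_ker_eq_pow_s9
  rw [← Matrix.rank, rank_transpose, finrank_fintype_fun_eq_card] at this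
  simpa [LinearMap.mem_ker, mulVec_transpose] using this

theorem Matrix.natCard_dotProduct_mulVec_eq_zero_s9 [DecidableEq n] (A : Matrix m n F) :
    Nat.card {p : (m → F) × (n → F) // p.1 ⬝ᵥ (A *ᵥ p.2) = 0} =
      zeroPairCount (Fintype.card F) (Fintype.card m) (Fintype.card n) A.rank := by
  classical
  have fiber (x : m → F) : Nat.card {y : n → F // x ⬝ᵥ (A *ᵥ y) = 0} =
      if x ᵥ* A = 0 then Fintype.card F ^ Fintype.card n
      else Fintype.card F ^ (Fintype.card n - 1) := by
    simp_rw [dotProduct_mulVec]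
    split_ifs with hx
    · simp [hx, Nat.card_eq_fintype_card]
    · exact natCard_dotProduct_eq_zero_s9 hx
  have left_kernel : (Finset.univ.filter fun x : m → F => x ᵥ* A = 0).card =
      Fintype.card F ^ (Fintype.card m - A.rank) := by
    rw [← Fintype.card_subtype, ← Nat.card_eq_fintype_card, natCard_vecMul_eq_zero_s9]
  rw [Nat.card_congr (Equiv.subtypeProdEquivSigmaSubtype fun x y => x ⬝ᵥ (A *ᵥ y) = 0),
    Nat.card_sigma]
  simp_rw [fiber]
  rw [Finset.sum_ite, Finset.sum_const, Finset.sum_const, smul_eq_mul, smul_eq_mul,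
    Finset.filter_not, Finset.card_sdiff_of_subset (Finset.filter_subset _ _), left_kernel,
    Finset.card_univ, Fintype.card_fun, zeroPairCount]

end FiniteField

theorem mul_add_tsub_mul_lt_mul_add_tsub_mul {a b c d e : ℕ} (hba : b < a) (hae : a ≤ e)
    (hcd : c < d) : b * d + (e - b) * c < a * d + (e - a) * c := by
  zify [hae, hba.le.trans hae]
  nlinarith

theorem zeroPairCount_lt_zeroPairCount {q k r s : ℕ} (hq : 2 ≤ q) (hrs : r < s) (hsk : s ≤ k) :
    zeroPairCount q k k s < zeroPairCount q k k r :=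
  mul_add_tsub_mul_lt_mul_add_tsub_mul (Nat.pow_lt_pow_right hq (by omega))
    (Nat.pow_le_pow_right (by omega) (by omega)) (Nat.pow_lt_pow_right hq (by omega))

theorem pow_mul_tsub_mul_pow_add_pow_eq_zeroPairCount {q k r : ℕ} (hq : 0 < q) (hr : r ≤ k) :
    q ^ (2 * (k - r)) * ((q ^ r - 1) * q ^ (r - 1) + q ^ r) = zeroPairCount q k k r := by
  obtain ⟨m, rfl⟩ := Nat.exists_eq_add_of_le hr
  rw [zeroPairCount]
  rcases r with _ | r
  · simp [← pow_add, two_mul]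
  · have h1 : 1 ≤ q ^ (r + 1) := Nat.one_le_pow _ _ hq
    have h2 : q ^ m ≤ q ^ (r + 1 + m) := Nat.pow_le_pow_right hq (by omega)
    simp only [Nat.add_sub_cancel_left, Nat.add_sub_cancel, show r + 1 + m - 1 = r + m by omega]
    zify [h1, h2]
    ring

theorem bilinear_zero_pairs_strict_anti_general (q k : ℕ) (hq : 2 ≤ q) :
    (∀ r s : ℕ, r < s → s ≤ k →
        q ^ (2 * (k - s)) * ((q ^ s - 1) * q ^ (s - 1) + q ^ s) <
          q ^ (2 * (k - r)) * ((q ^ r - 1) * q ^ (r - 1) + q ^ r)) ∧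
    (∀ (F : Type) [Field F] [Fintype F], Fintype.card F = q →
        ∀ A B : Matrix (Fin k) (Fin k) F, A.rank < B.rank →
          Nat.card {p : (Fin k → F) × (Fin k → F) //
              dotProduct p.1 (B.mulVec p.2) = 0} <
            Nat.card {p : (Fin k → F) × (Fin k → F) //
              dotProduct p.1 (A.mulVec p.2) = 0}) := by
  refine ⟨fun r s hrs hsk => ?_, fun F _ _ hF A B hAB => ?_⟩
  · rw [pow_mul_tsub_mul_pow_add_pow_eq_zeroPairCount (by omega) hsk,
      pow_mul_tsub_mul_pow_add_pow_eq_zeroPairCount (by omega) (hrs.le.trans hsk)]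
    exact zeroPairCount_lt_zeroPairCount hq hrs hsk
  · rw [natCard_dotProduct_mulVec_eq_zero_s9, natCard_dotProduct_mulVec_eq_zero_s9, Fintype.card_fin, hF]
    exact zeroPairCount_lt_zeroPairCount hq hAB (by simpa using B.rank_le_card_width)

/-- For integers `q ≥ 2` and `k ≥ 2`, the function
`r ↦ q^{2(k−r)}((qʳ − 1) q^{r−1} + qʳ)` is strictly decreasing for `0 ≤ r ≤ k`.
Equivalently, for matrices `A, B ∈ M_k(F)` over a finite field `F` of cardinality `q`
with `rank A < rank B`, the set `{(x,y) : xᵀ A y = 0}` is strictly larger than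
`{(x,y) : xᵀ B y = 0}`. -/
theorem bilinear_zero_pairs_strict_anti (q k : ℕ) (hq : 2 ≤ q) (hk : 2 ≤ k) :
    (∀ r s : ℕ, r < s → s ≤ k →
        q ^ (2 * (k - s)) * ((q ^ s - 1) * q ^ (s - 1) + q ^ s) <
          q ^ (2 * (k - r)) * ((q ^ r - 1) * q ^ (r - 1) + q ^ r)) ∧
    (∀ (F : Type) [Field F] [Fintype F], Fintype.card F = q →
        ∀ A B : Matrix (Fin k) (Fin k) F, A.rank < B.rank →
          Nat.card {p : (Fin k → F) × (Fin k → F) //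
              dotProduct p.1 (B.mulVec p.2) = 0} <
            Nat.card {p : (Fin k → F) × (Fin k → F) //
              dotProduct p.1 (A.mulVec p.2) = 0}) :=
  bilinear_zero_pairs_strict_anti_general q k hq
end

section
/- For every integer n ≥ 4 there exists q₀ such that for all integers q ≥ q₀, 𝔘_n(q) < q^{n²} − ∏_{k=1}^{n}(q^n − q^{k−1}). -/
/-- `v q k r = q^{2(k−r)}((qʳ − 1) q^{r−1} + qʳ)`. -/
def vAux (q : ℤ) (k r : ℕ) : ℤ :=
  q ^ (2 * (k - r)) * ((q ^ r - 1) * q ^ (r - 1) + q ^ r)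

def BndN (f : ℤ → ℤ) (d : ℕ) : Prop :=
  ∃ C q₀ : ℤ, 0 ≤ C ∧ 1 ≤ q₀ ∧ ∀ q : ℤ, q₀ ≤ q → 0 ≤ f q ∧ f q ≤ C * q ^ d



lemma bndN_congr {f g : ℤ → ℤ} {d : ℕ} (h : ∀ q, f q = g q) (hg : BndN g d) : BndN f d := by
  obtain ⟨C, q₀, hC, hq₀, H⟩ := hg
  exact ⟨C, q₀, hC, hq₀, fun q hq => by rw [h]; exact H q hq⟩

lemma bndN_mono {f : ℤ → ℤ} {d e : ℕ} (h : BndN f d) (hde : d ≤ e) : BndN f e := by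
  obtain ⟨C, q₀, hC, hq₀, H⟩ := h
  refine ⟨C, q₀, hC, hq₀, fun q hq => ⟨(H q hq).1, ?_⟩⟩
  have h1 : (1:ℤ) ≤ q := le_trans hq₀ hq
  calc f q ≤ C * q ^ d := (H q hq).2
    _ ≤ C * q ^ e := by
        have := pow_le_pow_right₀ h1 hde
        exact mul_le_mul_of_nonneg_left this hC

lemma bndN_add {f g : ℤ → ℤ} {d : ℕ} (hf : BndN f d) (hg : BndN g d) :
    BndN (fun q => f q + g q) d := by
  obtain ⟨C1, q1, hC1, hq1, H1⟩ := hf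
  obtain ⟨C2, q2, hC2, hq2, H2⟩ := hg
  refine ⟨C1 + C2, max q1 q2, by linarith, le_trans hq1 (le_max_left _ _), fun q hq => ?_⟩
  have h1 := H1 q (le_trans (le_max_left _ _) hq)
  have h2 := H2 q (le_trans (le_max_right _ _) hq)
  constructor
  · dsimp only; linarith [h1.1, h2.1]
  · dsimp only; rw [add_mul]; linarith [h1.2, h2.2]

lemma bndN_mul {f g : ℤ → ℤ} {d e : ℕ} (hf : BndN f d) (hg : BndN g e) :
    BndN (fun q => f q * g q) (d + e) := by
  obtain ⟨C1, q1, hC1, hq1, H1⟩ := hf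
  obtain ⟨C2, q2, hC2, hq2, H2⟩ := hg
  refine ⟨C1 * C2, max q1 q2, mul_nonneg hC1 hC2, le_trans hq1 (le_max_left _ _), fun q hq => ?_⟩
  have h1 := H1 q (le_trans (le_max_left _ _) hq)
  have h2 := H2 q (le_trans (le_max_right _ _) hq)
  have hqq : (1:ℤ) ≤ q := le_trans hq1 (le_trans (le_max_left _ _) hq)
  refine ⟨mul_nonneg h1.1 h2.1, ?_⟩
  calc f q * g q ≤ (C1 * q ^ d) * (C2 * q ^ e) := by
        exact mul_le_mul h1.2 h2.2 h2.1 (by positivity)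
    _ = C1 * C2 * q ^ (d + e) := by rw [pow_add]; ring

lemma bndN_const (c : ℤ) (hc : 0 ≤ c) : BndN (fun _ => c) 0 :=
  ⟨c, 1, hc, le_refl _, fun q _ => ⟨hc, by simp⟩⟩

lemma bndN_pow (d : ℕ) : BndN (fun q => q ^ d) d :=
  ⟨1, 1, by norm_num, le_refl _, fun q hq => ⟨by positivity, by simp⟩⟩

lemma bndN_pow_sub (d e : ℕ) (h : e ≤ d) : BndN (fun q => q ^ d - q ^ e) d := by
  refine ⟨1, 1, by norm_num, le_refl _, fun q hq => ⟨?_, ?_⟩⟩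
  · have := pow_le_pow_right₀ hq h; dsimp only; linarith
  · have : (0:ℤ) ≤ q ^ e := by positivity
    dsimp only; linarith

lemma bndN_sum (s : Finset ℕ) (f : ℕ → ℤ → ℤ) (d : ℕ) (h : ∀ k ∈ s, BndN (f k) d) :
    BndN (fun q => ∑ k ∈ s, f k q) d := by
  classical
  induction s using Finset.induction_on with
  | empty => exact ⟨0, 1, le_refl _, le_refl _, fun q _ => by simp⟩
  | @insert x s' hx ih =>
    have h1 : BndN (f x) d := h x (Finset.mem_insert_self _ _)
    have h2 : BndN (fun q => ∑ k ∈ s', f k q) d := ih (fun k hk => h k (Finset.mem_insert_of_mem hk))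
    have := bndN_add h1 h2
    refine bndN_congr (fun q => ?_) this
    rw [Finset.sum_insert hx]


lemma sub_pow_aux (e : ℕ) (q : ℤ) (hq : 3 ≤ q) :
    0 ≤ q ^ e - (q - 3) ^ e ∧ q ^ e - (q - 3) ^ e ≤ 3 * e * q ^ (e - 1) := by
  induction e with
  | zero => simp
  | succ e ih =>
    have hq0 : (0:ℤ) ≤ q - 3 := by linarith
    have hq1 : (0:ℤ) ≤ q := by linarith
    have hple : (q - 3) ^ e ≤ q ^ e := pow_le_pow_left₀ hq0 (by linarith) e
    have hpn : (0:ℤ) ≤ (q - 3) ^ e := pow_nonneg hq0 e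
    have hid : q ^ (e+1) - (q - 3) ^ (e+1) = q * (q ^ e - (q - 3) ^ e) + 3 * (q - 3) ^ e := by
      ring
    constructor
    · rw [hid]
      have := mul_nonneg hq1 ih.1
      linarith
    · rw [hid]
      rcases Nat.eq_zero_or_pos e with he | he
      · subst he; simp
      · have h1 : q * (q ^ e - (q - 3) ^ e) ≤ q * (3 * e * q ^ (e - 1)) :=
          mul_le_mul_of_nonneg_left ih.2 hq1
        have h2 : q * (3 * e * q ^ (e - 1)) = 3 * e * q ^ e := by
          rw [show q * (3 * (e:ℤ) * q ^ (e-1)) = 3 * e * (q * q ^ (e-1)) from by ring,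
            ← pow_succ' q (e-1), show e - 1 + 1 = e from by omega]
        have h3 : 3 * (q - 3) ^ e ≤ 3 * q ^ e := by linarith
        have : ((e:ℤ) + 1) = ((e+1 : ℕ) : ℤ) := by push_cast; ring
        have h4 : (e+1:ℕ) - 1 = e := by omega
        rw [h4]
        push_cast
        linarith

lemma sub_pow_bnd (e : ℕ) : BndN (fun q => q ^ e - (q - 3) ^ e) (e - 1) :=
  ⟨3 * e, 3, by positivity, by norm_num, fun q hq => sub_pow_aux e q hq⟩

lemma vAux_bnd (k r : ℕ) (h1 : 1 ≤ r) (h2 : r ≤ k) : BndN (fun q => vAux q k r) (2*k - 1) := by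
  refine ⟨2, 1, by norm_num, le_refl _, fun q hq => ?_⟩
  have hq0 : (0:ℤ) ≤ q := by linarith
  have hr1 : (1:ℤ) ≤ q ^ r := one_le_pow₀ hq
  have hrm : (0:ℤ) ≤ q ^ r - 1 := by linarith
  have hp : (0:ℤ) ≤ (q ^ r - 1) * q ^ (r-1) + q ^ r :=
    add_nonneg (mul_nonneg hrm (by positivity)) (by positivity)
  constructor
  · exact mul_nonneg (by positivity) hp
  · have hb : (q ^ r - 1) * q ^ (r-1) + q ^ r ≤ 2 * q ^ (2*r - 1) := by
      have e1 : (q ^ r - 1) * q ^ (r-1) ≤ q ^ r * q ^ (r-1) :=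
        mul_le_mul_of_nonneg_right (by linarith) (by positivity)
      have e2 : q ^ r * q ^ (r-1) = q ^ (2*r-1) := by
        rw [← pow_add, show r + (r-1) = 2*r-1 from by omega]
      have e3 : q ^ r ≤ q ^ (2*r-1) := pow_le_pow_right₀ hq (by omega)
      linarith
    calc vAux q k r ≤ q ^ (2*(k-r)) * (2 * q ^ (2*r-1)) := by
          exact mul_le_mul_of_nonneg_left hb (by positivity)
      _ = 2 * q ^ (2*k-1) := by
          rw [show q ^ (2*(k-r)) * (2 * q ^ (2*r-1)) = 2 * (q ^ (2*(k-r)) * q ^ (2*r-1)) from by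
            ring, ← pow_add, show 2*(k-r) + (2*r-1) = 2*k-1 from by omega]

lemma vAux_zero (q : ℤ) (k : ℕ) : vAux q k 0 = q ^ (2*k) := by simp [vAux]

lemma bndN_id : BndN (fun q => q) 1 :=
  ⟨1, 1, by norm_num, le_refl _, fun q hq => ⟨by linarith, by simp⟩⟩

lemma N0_bnd (L N0 : ℕ → ℤ → ℤ)
    (hN0two : ∀ q, N0 2 q = 1)
    (hN0 : ∀ n, 4 ≤ n → ∀ q, N0 (n - 1) q =
      1 + ∑ k ∈ Finset.Icc 1 (n - 3),
        ((n - 1).choose (n - k - 2) : ℤ) ^ 2 * q ^ (2 * (n - k - 2) * (k + 1)) *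
          (q ^ ((n - k - 2) ^ 2) - L (n - k - 2) q))
    (j : ℕ) (hj : 2 ≤ j)
    (hLb : ∀ i, 1 ≤ i → i + 2 ≤ j →
      ∃ q₀ : ℤ, 1 ≤ q₀ ∧ ∀ q, q₀ ≤ q → 0 ≤ L i q ∧ L i q ≤ q ^ (i^2)) :
    BndN (N0 j) (j^2 - 4) := by
  rcases eq_or_lt_of_le hj with hj2 | hj3
  · subst hj2
    exact ⟨1, 1, by norm_num, le_refl _, fun q hq => by rw [hN0two]; norm_num⟩
  · have hrw := hN0 (j+1) (by omega)
    simp only [show j+1-1 = j from rfl, show j+1-3 = j-2 from by omega,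
      show ∀ k : ℕ, j+1-k-2 = j-k-1 from fun k => by omega] at hrw
    refine bndN_congr hrw ?_
    refine bndN_add (bndN_mono (bndN_const 1 (by norm_num)) (Nat.zero_le _)) ?_
    refine bndN_sum _ _ _ (fun k hk => ?_)
    obtain ⟨hk1, hk2⟩ := Finset.mem_Icc.mp hk
    -- the diff part
    obtain ⟨q₀, hq₀, HL⟩ := hLb (j-k-1) (by omega) (by omega)
    have hdiff : BndN (fun q => q ^ ((j-k-1)^2) - L (j-k-1) q) ((j-k-1)^2) := by
      refine ⟨1, q₀, by norm_num, hq₀, fun q hq => ?_⟩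
      have := HL q hq
      constructor
      · dsimp only; linarith [this.2]
      · dsimp only; rw [one_mul]; linarith [this.1]
    have hterm := bndN_mul (bndN_mul
      (bndN_const ((j.choose (j-k-1) : ℤ)^2) (by positivity)) (bndN_pow (2*(j-k-1)*(k+1))))
      hdiff
    refine bndN_mono hterm ?_
    apply Nat.le_sub_of_add_le
    obtain ⟨i, hi⟩ : ∃ i, j-k-1 = i := ⟨_, rfl⟩
    rw [hi]
    have hji : j = i + k + 1 := by omega
    subst hji
    have hik : 1 ≤ i := by omega
    nlinarith [sq_nonneg (k+1)]

lemma N1_bnd (U N0 N1 : ℕ → ℤ → ℤ)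
    (hN1 : ∀ n, 4 ≤ n → ∀ q, N1 (n - 1) q =
      (q ^ ((n - 1) ^ 2 - 1) - (q - 3) ^ ((n - 1) ^ 2 - 1)) +
        N0 (n - 2) q * q ^ (2 * (n - 2) + 1) +
        q * U (n - 2) q * vAux q (n - 2) 1)
    (j : ℕ) (hj : 3 ≤ j)
    (hN0b : BndN (N0 (j-1)) ((j-1)^2 - 4))
    (hUb : ∃ q₀ : ℤ, 1 ≤ q₀ ∧ ∀ q, q₀ ≤ q →
      0 ≤ U (j-1) q ∧ U (j-1) q ≤ 2 * q ^ ((j-1)^2 - 1)) :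
    BndN (N1 j) (j^2 - 2) := by
  obtain ⟨b, rfl⟩ : ∃ b, j = b + 3 := ⟨j - 3, by omega⟩
  have hrw := hN1 (b+4) (by omega)
  simp only [show b+4-1 = b+3 from rfl, show b+4-2 = b+2 from rfl] at hrw
  have hU' : BndN (U (b+2)) ((b+2)^2 - 1) := by
    obtain ⟨q₀, hq₀, H⟩ := hUb
    exact ⟨2, q₀, by norm_num, hq₀, fun q hq => H q hq⟩
  have t1 : BndN (fun q => q ^ ((b+3)^2 - 1) - (q-3) ^ ((b+3)^2 - 1)) ((b+3)^2 - 2) :=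
    bndN_mono (sub_pow_bnd ((b+3)^2 - 1)) (by omega)
  have t2 : BndN (fun q => N0 (b+2) q * q ^ (2*(b+2)+1)) ((b+3)^2 - 2) := by
    refine bndN_mono (bndN_mul hN0b (bndN_pow (2*(b+2)+1))) ?_
    simp only [show b+3-1 = b+2 from rfl, show (b+2)^2 = b*b+4*b+4 from by ring,
      show (b+3)^2 = b*b+6*b+9 from by ring]
    omega
  have t3 : BndN (fun q => q * U (b+2) q * vAux q (b+2) 1) ((b+3)^2 - 2) := by
    refine bndN_mono (bndN_mul (bndN_mul bndN_id hU') (vAux_bnd (b+2) 1 (by omega) (by omega))) ?_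
    simp only [show (b+2)^2 = b*b+4*b+4 from by ring, show (b+3)^2 = b*b+6*b+9 from by ring]
    omega
  refine bndN_congr hrw ?_
  exact bndN_add (bndN_add t1 t2) t3

def Key (L U : ℕ → ℤ → ℤ) (m : ℕ) : Prop :=
  ∃ C q₀ : ℤ, 0 ≤ C ∧ 1 ≤ q₀ ∧ ∀ q : ℤ, q₀ ≤ q →
    (0 ≤ L m q ∧ L m q ≤ q ^ (m^2)) ∧
    (0 ≤ U m q ∧ U m q ≤ 2 * q ^ (m^2 - 1)) ∧
    (3 ≤ m →
      (0 ≤ U m q - L m q ∧ U m q - L m q ≤ C * q ^ (m^2 - 2)) ∧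
      (0 ≤ U m q - q ^ (m^2 - 1) ∧ U m q - q ^ (m^2 - 1) ≤ C * q ^ (m^2 - 3)))

lemma key_all (L U N0 N1 : ℕ → ℤ → ℤ)
    (hL1 : ∀ q, L 1 q = 0) (hL2 : ∀ q, L 2 q = 0)
    (hU1 : ∀ q, U 1 q = 1) (hU2 : ∀ q, U 2 q = q ^ 3 + q ^ 2 - q)
    (hL3 : ∀ q, L 3 q =
      q ^ 9 - (q ^ 3 - 1) * (q ^ 3 - q) * (q ^ 3 - q ^ 2) - q ^ 2 * (q - 1) ^ 5)
    (hU3 : ∀ q, U 3 q =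
      q ^ 9 - (q ^ 3 - 1) * (q ^ 3 - q) * (q ^ 3 - q ^ 2) - q ^ 2 * (q - 1) ^ 5)
    (hN0two : ∀ q, N0 2 q = 1)
    (hN0 : ∀ n, 4 ≤ n → ∀ q, N0 (n - 1) q =
      1 + ∑ k ∈ Finset.Icc 1 (n - 3),
        ((n - 1).choose (n - k - 2) : ℤ) ^ 2 * q ^ (2 * (n - k - 2) * (k + 1)) *
          (q ^ ((n - k - 2) ^ 2) - L (n - k - 2) q))
    (hN1 : ∀ n, 4 ≤ n → ∀ q, N1 (n - 1) q =
      (q ^ ((n - 1) ^ 2 - 1) - (q - 3) ^ ((n - 1) ^ 2 - 1)) +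
        N0 (n - 2) q * q ^ (2 * (n - 2) + 1) +
        q * U (n - 2) q * vAux q (n - 2) 1)
    (hL : ∀ n, 4 ≤ n → ∀ q, L n q =
      (q ^ ((n - 1) ^ 2) - U (n - 1) q) * q ^ (2 * (n - 1)))
    (hU : ∀ n, 4 ≤ n → ∀ q, U n q =
      (q ^ ((n - 1) ^ 2) - L (n - 1) q) * q ^ (2 * (n - 1)) +
        q * N0 (n - 1) q * vAux q (n - 1) 0 +
        q * N1 (n - 1) q * vAux q (n - 1) 1 +
        q * U (n - 1) q * vAux q (n - 1) 2) :
    ∀ m : ℕ, 1 ≤ m → Key L U m := by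
  intro m
  induction m using Nat.strong_induction_on with
  | _ m IH =>
  intro hm
  rcases lt_or_ge m 4 with h4 | h4
  · interval_cases m
    · -- m = 1
      refine ⟨1, 1, by norm_num, le_refl _, fun q hq => ?_⟩
      rw [hL1, hU1]
      have hq0 : (0:ℤ) ≤ q := by linarith
      refine ⟨⟨le_refl 0, by positivity⟩, ⟨by norm_num, ?_⟩, fun h => absurd h (by norm_num)⟩
      norm_num
    · -- m = 2
      refine ⟨1, 1, by norm_num, le_refl _, fun q hq => ?_⟩
      rw [hL2, hU2]
      have hq0 : (0:ℤ) ≤ q := by linarith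
      have h1 : q^2 ≤ q^3 := pow_le_pow_right₀ hq (by norm_num)
      have h2 : q ≤ q^2 := by nlinarith
      have h3 : (0:ℤ) ≤ q^3 := by positivity
      have h4 : (0:ℤ) ≤ q^4 := by positivity
      exact ⟨⟨le_refl 0, by norm_num; positivity⟩,
        ⟨by norm_num; linarith, by norm_num; linarith⟩, fun h => absurd h (by norm_num)⟩
    · -- m = 3
      refine ⟨6, 12, by norm_num, by norm_num, fun q hq => ?_⟩
      rw [hL3, hU3]
      have hq1 : (1:ℤ) ≤ q := by linarith
      have hq0 : (0:ℤ) ≤ q := by linarith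
      have pid : q ^ 9 - (q ^ 3 - 1) * (q ^ 3 - q) * (q ^ 3 - q ^ 2) - q ^ 2 * (q - 1) ^ 5
          = q^8 + 5*q^6 - 11*q^5 + 9*q^4 - 4*q^3 + q^2 := by ring
      rw [pid]
      have step : ∀ (c : ℤ) (d : ℕ), 0 ≤ c → c ≤ 12 → c * q^d ≤ q^(d+1) := by
        intro c d hc hc12
        have h0 : (0:ℤ) ≤ q^d := by positivity
        calc c * q^d ≤ 12 * q^d := by nlinarith
          _ ≤ q * q^d := mul_le_mul_of_nonneg_right (by linarith) h0
          _ = q^(d+1) := by ring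
      have mono : ∀ d e : ℕ, d ≤ e → q^d ≤ q^e := fun d e h => pow_le_pow_right₀ hq1 h
      have A : 11 * q^5 ≤ q^6 := step 11 5 (by norm_num) (by norm_num)
      have B : 4 * q^3 ≤ q^4 := step 4 3 (by norm_num) (by norm_num)
      have C5 : 5 * q^6 ≤ q^7 := step 5 6 (by norm_num) (by norm_num)
      have C9 : 9 * q^4 ≤ q^5 := step 9 4 (by norm_num) (by norm_num)
      have C1 : q^2 ≤ q^3 := mono 2 3 (by norm_num)
      have D7 : q^7 ≤ q^8 := mono 7 8 (by norm_num)
      have D5 : q^5 ≤ q^6 := mono 5 6 (by norm_num)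
      have D56 : q^5 ≤ q^8 := mono 5 8 (by norm_num)
      have D3 : q^3 ≤ q^4 := mono 3 4 (by norm_num)
      have D8 : 2 * q^8 ≤ q^9 := step 2 8 (by norm_num) (by norm_num)
      have P2 : (0:ℤ) ≤ q^2 := by positivity
      have P4 : (0:ℤ) ≤ q^4 := by positivity
      have P6 : (0:ℤ) ≤ q^6 := by positivity
      have P8 : (0:ℤ) ≤ q^8 := by positivity
      have E1 : q^4 ≤ q^6 := mono 4 6 (by norm_num)
      have E2 : q^2 ≤ q^6 := mono 2 6 (by norm_num)
      have F1 : (0:ℤ) ≤ 6 * q^7 := by positivity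
      simp only [show (3:ℕ)^2 - 1 = 8 from by norm_num,
        show (3:ℕ)^2 - 2 = 7 from by norm_num, show (3:ℕ)^2 - 3 = 6 from by norm_num]
      simp only [show (3:ℕ)^2 = 9 from by norm_num]
      refine ⟨⟨by linarith, by linarith⟩, ⟨by linarith, by linarith⟩,
        fun _ => ⟨⟨by linarith, by linarith⟩, by linarith, by linarith⟩⟩
  · -- step: m ≥ 4
    obtain ⟨b, rfl⟩ : ∃ b, m = b + 4 := ⟨m - 4, by omega⟩
    -- IH at b+3
    obtain ⟨Cj, qj, hCj, hqj, HKj⟩ := IH (b+3) (by omega) (by omega)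
    -- L-bounds for lower indices
    have hLb : ∀ jj, jj ≤ b + 3 → ∀ i, 1 ≤ i → i + 2 ≤ jj →
        ∃ q₀ : ℤ, 1 ≤ q₀ ∧ ∀ q, q₀ ≤ q → 0 ≤ L i q ∧ L i q ≤ q ^ (i^2) := by
      intro jj hjj i hi1 hi2
      obtain ⟨C, q₀, hC, hq₀, H⟩ := IH i (by omega) hi1
      exact ⟨q₀, hq₀, fun q hq => (H q hq).1⟩
    have hN0b : BndN (N0 (b+3)) ((b+3)^2 - 4) :=
      N0_bnd L N0 hN0two hN0 (b+3) (by omega) (hLb (b+3) (le_refl _))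
    have hN0b' : BndN (N0 (b+2)) ((b+2)^2 - 4) :=
      N0_bnd L N0 hN0two hN0 (b+2) (by omega) (hLb (b+2) (by omega))
    have hUb' : ∃ q₀ : ℤ, 1 ≤ q₀ ∧ ∀ q, q₀ ≤ q →
        0 ≤ U (b+2) q ∧ U (b+2) q ≤ 2 * q ^ ((b+2)^2 - 1) := by
      obtain ⟨C, q₀, hC, hq₀, H⟩ := IH (b+2) (by omega) (by omega)
      exact ⟨q₀, hq₀, fun q hq => (H q hq).2.1⟩
    have hN1b : BndN (N1 (b+3)) ((b+3)^2 - 2) :=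
      N1_bnd U N0 N1 hN1 (b+3) (by omega) hN0b' hUb'
    -- identities
    have hlid : ∀ q : ℤ, L (b+4) q = q^(b*b+8*b+15) - U (b+3) q * q^(2*b+6) := by
      intro q
      rw [hL (b+4) (by omega) q]
      simp only [show b+4-1 = b+3 from rfl]
      rw [show (2*(b+3)) = 2*b+6 from by omega]
      have : (b+3)^2 + (2*b+6) = b*b+8*b+15 := by ring
      rw [sub_mul, ← pow_add, this]
    have huid : ∀ q : ℤ, U (b+4) q - q^(b*b+8*b+15) =
        (U (b+3) q - L (b+3) q) * q^(2*b+6) +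
        U (b+3) q * (q^(2*b+5) - q^(2*b+4)) +
        N0 (b+3) q * q^(2*b+7) +
        q * N1 (b+3) q * vAux q (b+3) 1 := by
      intro q
      rw [hU (b+4) (by omega) q]
      simp only [show b+4-1 = b+3 from rfl]
      rw [vAux_zero, show vAux q (b+3) 2 = q^(2*b+2) * ((q^2-1)*q + q^2) from by
        rw [vAux, show (b+3)-2 = b+1 from rfl]; ring]
      ring
    -- BndN for E := U (b+4) - q^(b*b+8*b+15)
    have hDj : BndN (fun q => U (b+3) q - L (b+3) q) ((b+3)^2 - 2) :=
      ⟨Cj, qj, hCj, hqj, fun q hq => ((HKj q hq).2.2 (by omega)).1⟩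
    have hUj : BndN (U (b+3)) ((b+3)^2 - 1) :=
      ⟨2, qj, by norm_num, hqj, fun q hq => (HKj q hq).2.1⟩
    have tA : BndN (fun q => (U (b+3) q - L (b+3) q) * q^(2*b+6)) (b*b+8*b+13) := by
      refine bndN_mono (bndN_mul hDj (bndN_pow (2*b+6))) ?_
      simp only [show (b+3)^2 = b*b+6*b+9 from by ring]
      omega
    have tB : BndN (fun q => U (b+3) q * (q^(2*b+5) - q^(2*b+4))) (b*b+8*b+13) := by
      refine bndN_mono (bndN_mul hUj (bndN_pow_sub (2*b+5) (2*b+4) (by omega))) ?_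
      simp only [show (b+3)^2 = b*b+6*b+9 from by ring]
      omega
    have tC : BndN (fun q => N0 (b+3) q * q^(2*b+7)) (b*b+8*b+13) := by
      refine bndN_mono (bndN_mul hN0b (bndN_pow (2*b+7))) ?_
      simp only [show (b+3)^2 = b*b+6*b+9 from by ring]
      omega
    have tD : BndN (fun q => q * N1 (b+3) q * vAux q (b+3) 1) (b*b+8*b+13) := by
      refine bndN_mono (bndN_mul (bndN_mul bndN_id hN1b)
        (vAux_bnd (b+3) 1 (by omega) (by omega))) ?_
      simp only [show (b+3)^2 = b*b+6*b+9 from by ring]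
      omega
    have hE : BndN (fun q => U (b+4) q - q^(b*b+8*b+15)) (b*b+8*b+13) := by
      refine bndN_congr huid ?_
      exact bndN_add (bndN_add (bndN_add tA tB) tC) tD
    obtain ⟨CE, qE, hCE, hqE, HE⟩ := hE
    -- assemble Key (b+4)
    refine ⟨CE + 2, max (max qE qj) (CE + 2), by linarith,
      le_trans (by linarith) (le_max_right _ _), fun q hq => ?_⟩
    have hqE' : qE ≤ q := le_trans (le_trans (le_max_left _ _) (le_max_left _ _)) hq
    have hqj' : qj ≤ q := le_trans (le_trans (le_max_right _ _) (le_max_left _ _)) hq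
    have hqC : CE + 2 ≤ q := le_trans (le_max_right _ _) hq
    have hq1 : (1:ℤ) ≤ q := le_trans hqE hqE'
    have hq2 : (2:ℤ) ≤ q := by linarith
    have HEq := HE q hqE'
    dsimp only at HEq
    have HKjq := HKj q hqj'
    have hUj0 : 0 ≤ U (b+3) q := HKjq.2.1.1
    have hUj3 : U (b+3) q ≤ 2 * q ^ (b*b+6*b+8) := by
      have := HKjq.2.1.2
      rwa [show (b+3)^2 - 1 = b*b+6*b+8 from Nat.sub_eq_of_eq_add (by ring)] at this
    simp only [show (b+4)^2 - 1 = b*b+8*b+15 from Nat.sub_eq_of_eq_add (by ring),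
      show (b+4)^2 - 2 = b*b+8*b+14 from Nat.sub_eq_of_eq_add (by ring),
      show (b+4)^2 - 3 = b*b+8*b+13 from Nat.sub_eq_of_eq_add (by ring)]
    simp only [show (b+4)^2 = b*b+8*b+16 from by ring]
    have pos : ∀ d : ℕ, (0:ℤ) < q ^ d := fun d => pow_pos (by linarith) d
    have e1 : U (b+3) q * q^(2*b+6) ≤ 2 * q^(b*b+8*b+14) := by
      calc U (b+3) q * q^(2*b+6) ≤ 2 * q^(b*b+6*b+8) * q^(2*b+6) :=
            mul_le_mul_of_nonneg_right hUj3 (le_of_lt (pos _))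
        _ = 2 * q^(b*b+8*b+14) := by
            rw [mul_assoc, ← pow_add, show b*b+6*b+8+(2*b+6) = b*b+8*b+14 from by omega]
    have e1' : 0 ≤ U (b+3) q * q^(2*b+6) := mul_nonneg hUj0 (le_of_lt (pos _))
    have e2 : 2 * q^(b*b+8*b+14) ≤ q^(b*b+8*b+15) := by
      calc 2 * q^(b*b+8*b+14) ≤ q * q^(b*b+8*b+14) :=
            mul_le_mul_of_nonneg_right hq2 (le_of_lt (pos _))
        _ = q^(b*b+8*b+15) := by
            rw [show b*b+8*b+15 = (b*b+8*b+14)+1 from by omega]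
            exact (pow_succ' q _).symm
    have e3 : CE * q^(b*b+8*b+13) ≤ q^(b*b+8*b+14) := by
      calc CE * q^(b*b+8*b+13) ≤ q * q^(b*b+8*b+13) :=
            mul_le_mul_of_nonneg_right (by linarith) (le_of_lt (pos _))
        _ = q^(b*b+8*b+14) := by
            rw [show b*b+8*b+14 = (b*b+8*b+13)+1 from by omega]
            exact (pow_succ' q _).symm
    have e4 : q^(b*b+8*b+14) ≤ q^(b*b+8*b+15) := pow_le_pow_right₀ hq1 (by omega)
    have e5 : q^(b*b+8*b+15) ≤ q^(b*b+8*b+16) := pow_le_pow_right₀ hq1 (by omega)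
    have e6 : CE * q^(b*b+8*b+13) ≤ CE * q^(b*b+8*b+14) :=
      mul_le_mul_of_nonneg_left (pow_le_pow_right₀ hq1 (by omega)) hCE
    refine ⟨?_, ?_, fun _ => ⟨?_, ?_⟩⟩
    · rw [hlid q]
      constructor
      · linarith
      · linarith
    · constructor
      · linarith [le_of_lt (pos (b*b+8*b+15)), HEq.1]
      · linarith [HEq.2]
    · rw [hlid q]
      constructor
      · linarith [HEq.1]
      · have hx : (CE+2) * q^(b*b+8*b+14) = CE * q^(b*b+8*b+14) + 2*q^(b*b+8*b+14) := by ring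
        linarith [HEq.2]
    · constructor
      · exact HEq.1
      · have hx : (CE+2) * q^(b*b+8*b+13) = CE * q^(b*b+8*b+13) + 2*q^(b*b+8*b+13) := by ring
        linarith [HEq.2, le_of_lt (pos (b*b+8*b+13))]

/-- For every `n ≥ 4` there exists `q₀` such that for all integers `q ≥ q₀`,
`𝔘ₙ(q) < q^{n²} − ∏_{k=1}^{n}(qⁿ − q^{k−1})`, the number of singular `n×n` matrices
over a field with `q` elements. -/
theorem upper_bound_lt_singular_count
    (L U N0 N1 : ℕ → ℤ → ℤ)
    (hL1 : ∀ q, L 1 q = 0) (hL2 : ∀ q, L 2 q = 0)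
    (hU1 : ∀ q, U 1 q = 1) (hU2 : ∀ q, U 2 q = q ^ 3 + q ^ 2 - q)
    (hL3 : ∀ q, L 3 q =
      q ^ 9 - (q ^ 3 - 1) * (q ^ 3 - q) * (q ^ 3 - q ^ 2) - q ^ 2 * (q - 1) ^ 5)
    (hU3 : ∀ q, U 3 q =
      q ^ 9 - (q ^ 3 - 1) * (q ^ 3 - q) * (q ^ 3 - q ^ 2) - q ^ 2 * (q - 1) ^ 5)
    (hN0two : ∀ q, N0 2 q = 1)
    (hN0 : ∀ n, 4 ≤ n → ∀ q, N0 (n - 1) q =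
      1 + ∑ k ∈ Finset.Icc 1 (n - 3),
        ((n - 1).choose (n - k - 2) : ℤ) ^ 2 * q ^ (2 * (n - k - 2) * (k + 1)) *
          (q ^ ((n - k - 2) ^ 2) - L (n - k - 2) q))
    (hN1 : ∀ n, 4 ≤ n → ∀ q, N1 (n - 1) q =
      (q ^ ((n - 1) ^ 2 - 1) - (q - 3) ^ ((n - 1) ^ 2 - 1)) +
        N0 (n - 2) q * q ^ (2 * (n - 2) + 1) +
        q * U (n - 2) q * vAux q (n - 2) 1)
    (hL : ∀ n, 4 ≤ n → ∀ q, L n q =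
      (q ^ ((n - 1) ^ 2) - U (n - 1) q) * q ^ (2 * (n - 1)))
    (hU : ∀ n, 4 ≤ n → ∀ q, U n q =
      (q ^ ((n - 1) ^ 2) - L (n - 1) q) * q ^ (2 * (n - 1)) +
        q * N0 (n - 1) q * vAux q (n - 1) 0 +
        q * N1 (n - 1) q * vAux q (n - 1) 1 +
        q * U (n - 1) q * vAux q (n - 1) 2)
    (n : ℕ) (hn : 4 ≤ n) :
    ∃ q₀ : ℤ, ∀ q : ℤ, q₀ ≤ q →
      U n q < q ^ (n ^ 2) - ∏ k ∈ Finset.Icc 1 n, (q ^ n - q ^ (k - 1)) := by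
  have hkey : Key L U n := key_all L U N0 N1 hL1 hL2 hU1 hU2 hL3 hU3 hN0two hN0 hN1 hL hU n
    (by omega)
  obtain ⟨a, rfl⟩ : ∃ a, n = a + 4 := ⟨n - 4, by omega⟩
  obtain ⟨C, q₀, hC, hq₀, H⟩ := hkey
  refine ⟨max q₀ (C + 2), fun q hq => ?_⟩
  have hq₀' : q₀ ≤ q := le_trans (le_max_left _ _) hq
  have hqC : C + 2 ≤ q := le_trans (le_max_right _ _) hq
  have hq1 : (1:ℤ) ≤ q := le_trans hq₀ hq₀'
  have pos : ∀ d : ℕ, (0:ℤ) < q ^ d := fun d => pow_pos (by linarith) d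
  have HEq := (H q hq₀').2.2 (by omega)
  have hUup : U (a+4) q ≤ q ^ ((a+4)^2 - 1) + C * q ^ ((a+4)^2 - 3) := by linarith [HEq.2.2]
  -- product bound
  have hfn : ∀ k : ℕ, k ∈ Finset.Icc 1 (a+2) → (0:ℤ) ≤ q ^ (a+4) - q ^ (k-1) := by
    intro k hk
    obtain ⟨h1, h2⟩ := Finset.mem_Icc.mp hk
    have := pow_le_pow_right₀ hq1 (show k - 1 ≤ a + 4 from by omega)
    linarith
  have hfn2 : ∀ k : ℕ, k ∈ Finset.Icc 1 (a+2) → q ^ (a+4) - q ^ (k-1) ≤ q ^ (a+4) := by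
    intro k hk
    have := le_of_lt (pos (k-1))
    linarith
  have hsplit : ∏ k ∈ Finset.Icc 1 (a+4), (q ^ (a+4) - q ^ (k-1)) =
      (∏ k ∈ Finset.Icc 1 (a+2), (q ^ (a+4) - q ^ (k-1))) *
        (q ^ (a+4) - q ^ (a+2)) * (q ^ (a+4) - q ^ (a+3)) := by
    rw [show a+4 = (a+3)+1 from rfl, Finset.prod_Icc_succ_top (by omega),
      show a+3 = (a+2)+1 from rfl, Finset.prod_Icc_succ_top (by omega)]
    simp only [show (a+2)+1-1 = a+2 from by omega, show (a+2)+1+1-1 = a+3 from by omega]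
  have hP1 : (∏ k ∈ Finset.Icc 1 (a+2), (q ^ (a+4) - q ^ (k-1))) ≤ (q ^ (a+4))^(a+2) := by
    have := Finset.prod_le_prod hfn hfn2
    calc (∏ k ∈ Finset.Icc 1 (a+2), (q ^ (a+4) - q ^ (k-1)))
        ≤ ∏ _k ∈ Finset.Icc 1 (a+2), q ^ (a+4) := this
      _ = (q ^ (a+4))^(a+2) := by
          rw [Finset.prod_const, Nat.card_Icc]
          norm_num
  have hf3 : (0:ℤ) ≤ q ^ (a+4) - q ^ (a+2) := by
    have := pow_le_pow_right₀ hq1 (show a+2 ≤ a+4 from by omega); linarith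
  have hf4 : (0:ℤ) ≤ q ^ (a+4) - q ^ (a+3) := by
    have := pow_le_pow_right₀ hq1 (show a+3 ≤ a+4 from by omega); linarith
  have hP0 : (0:ℤ) ≤ ∏ k ∈ Finset.Icc 1 (a+2), (q ^ (a+4) - q ^ (k-1)) :=
    Finset.prod_nonneg hfn
  have hprod : ∏ k ∈ Finset.Icc 1 (a+4), (q ^ (a+4) - q ^ (k-1)) ≤
      q ^ ((a+4)^2) - q ^ ((a+4)^2 - 1) - q ^ ((a+4)^2 - 2) + q ^ ((a+4)^2 - 3) := by
    rw [hsplit]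
    have step1 : (∏ k ∈ Finset.Icc 1 (a+2), (q ^ (a+4) - q ^ (k-1))) * (q ^ (a+4) - q ^ (a+2))
        ≤ (q ^ (a+4))^(a+2) * (q ^ (a+4) - q ^ (a+2)) :=
      mul_le_mul_of_nonneg_right hP1 hf3
    have step2 : (∏ k ∈ Finset.Icc 1 (a+2), (q ^ (a+4) - q ^ (k-1))) * (q ^ (a+4) - q ^ (a+2))
        * (q ^ (a+4) - q ^ (a+3)) ≤ (q ^ (a+4))^(a+2) * (q ^ (a+4) - q ^ (a+2))
        * (q ^ (a+4) - q ^ (a+3)) := mul_le_mul_of_nonneg_right step1 hf4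
    have heq : (q ^ (a+4))^(a+2) * (q ^ (a+4) - q ^ (a+2)) * (q ^ (a+4) - q ^ (a+3)) =
        q ^ ((a+4)^2) - q ^ ((a+4)^2 - 1) - q ^ ((a+4)^2 - 2) + q ^ ((a+4)^2 - 3) := by
      simp only [show (a+4)^2 - 1 = a*a+8*a+15 from Nat.sub_eq_of_eq_add (by ring),
        show (a+4)^2 - 2 = a*a+8*a+14 from Nat.sub_eq_of_eq_add (by ring),
        show (a+4)^2 - 3 = a*a+8*a+13 from Nat.sub_eq_of_eq_add (by ring)]
      simp only [show (a+4)^2 = a*a+8*a+16 from by ring]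
      ring
    linarith [step2, heq.le, heq.ge]
  -- final chain
  have hstrict : C * q ^ ((a+4)^2 - 3) < q ^ ((a+4)^2 - 2) - q ^ ((a+4)^2 - 3) := by
    have h1 : (C + 1) * q ^ ((a+4)^2 - 3) < q * q ^ ((a+4)^2 - 3) :=
      mul_lt_mul_of_pos_right (by linarith) (pos _)
    have h2 : q * q ^ ((a+4)^2 - 3) = q ^ ((a+4)^2 - 2) := by
      rw [show (a+4)^2 - 2 = ((a+4)^2 - 3)+1 from by
        simp only [show (a+4)^2 - 2 = a*a+8*a+14 from Nat.sub_eq_of_eq_add (by ring),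
          show (a+4)^2 - 3 = a*a+8*a+13 from Nat.sub_eq_of_eq_add (by ring)]]
      exact (pow_succ' q _).symm
    nlinarith [h1, h2]
  linarith [hUup, hprod, hstrict]
end

section
/- For every integer n ≥ 4 there exists a constant C such that for all integers q ≥ 2, |𝔏_n(q) − (q^{n²−1} − q^{n²−2})| ≤ C q^{n²−3}. -/
open Asymptotics Filter Set

theorem isBigO_pow_pow {k d : ℕ} (h : k ≤ d) :
    (fun q : ℤ => q ^ k) =O[𝓟 (Ici 2)] (· ^ d) := by
  refine IsBigO.of_bound 1 (eventually_principal.2 fun q (hq : 2 ≤ q) => ?_)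
  rw [one_mul, norm_pow, norm_pow]
  exact pow_le_pow_right₀ (by rw [Int.norm_eq_abs]; exact_mod_cast Int.one_le_abs (by omega)) h

theorem isBigO_const_pow (c : ℤ) (d : ℕ) : (fun _ : ℤ => c) =O[𝓟 (Ici 2)] (· ^ d) :=
  (isBigO_const_one ℤ c _).trans (by simpa using isBigO_pow_pow (Nat.zero_le d))

theorem isBigO_sub_const_pow (c : ℤ) (k : ℕ) :
    (fun q : ℤ => (q - c) ^ k) =O[𝓟 (Ici 2)] (· ^ k) := by
  simpa using ((isBigO_pow_pow (le_refl 1)).sub (isBigO_const_pow c 1)).pow k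

theorem Asymptotics.IsBigO.mul_pow {f g : ℤ → ℤ} {a b d : ℕ} (hf : f =O[𝓟 (Ici 2)] (· ^ a))
    (hg : g =O[𝓟 (Ici 2)] (· ^ b)) (h : a + b ≤ d) :
    (fun q => f q * g q) =O[𝓟 (Ici 2)] (· ^ d) :=
  (hf.mul hg).trans (by simpa only [pow_add] using isBigO_pow_pow h)

theorem isBigO_of_isBigO_sub_pow {f : ℤ → ℤ} {d e : ℕ}
    (hf : (fun q => f q - q ^ d) =O[𝓟 (Ici 2)] (· ^ e)) (he : e ≤ d) :
    f =O[𝓟 (Ici 2)] (· ^ d) :=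
  (hf.trans (isBigO_pow_pow he)).add (isBigO_pow_pow le_rfl) |>.congr_left fun q => by ring

theorem isBigO_id_pow_one : (fun q : ℤ => q) =O[𝓟 (Ici 2)] (· ^ 1) :=
  (isBigO_pow_pow (le_refl 1)).congr_left pow_one

theorem exists_int_bound_of_isBigO {f : ℤ → ℤ} {d : ℕ} (hf : f =O[𝓟 (Ici 2)] (· ^ d)) :
    ∃ C : ℤ, ∀ q : ℤ, 2 ≤ q → |f q| ≤ C * q ^ d := by
  obtain ⟨c, hc⟩ := hf.bound
  refine ⟨⌈c⌉, fun q hq => ?_⟩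
  have hbound : ‖f q‖ ≤ c * ‖q ^ d‖ := eventually_principal.1 hc q hq
  have hqd : (0 : ℝ) ≤ ‖q ^ d‖ := norm_nonneg _
  have : |f q| ≤ ⌈c⌉ * |q ^ d| := by
    simp only [Int.norm_eq_abs] at hbound hqd
    exact_mod_cast hbound.trans (mul_le_mul_of_nonneg_right (Int.le_ceil c) hqd)
  rwa [abs_of_nonneg (pow_nonneg (by omega : (0 : ℤ) ≤ q) d)] at this

-- At `r = 0` the truncated `2 * r - 1 = 0` is still the right degree, as `vAux q k 0 = q ^ (2 * k)`.
theorem isBigO_vAux (k r : ℕ) :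
    (fun q => vAux q k r) =O[𝓟 (Ici 2)] (· ^ (2 * (k - r) + (2 * r - 1))) := by
  refine (isBigO_pow_pow le_rfl).mul_pow ?_ le_rfl
  exact ((((isBigO_pow_pow le_rfl).sub (isBigO_const_pow 1 r)).mul_pow
    (isBigO_pow_pow le_rfl) (by omega)).add (isBigO_pow_pow (by omega)))

/-- The recursion for `L = 𝔏`, `U = 𝔘`, `N0 = 𝔑⁽⁰⁾`, `N1 = 𝔑⁽¹⁾`. -/
structure LowerUpperRecursion (L U N0 N1 : ℕ → ℤ → ℤ) : Prop where
  L_one : ∀ q, L 1 q = 0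
  L_two : ∀ q, L 2 q = 0
  U_two : ∀ q, U 2 q = q ^ 3 + q ^ 2 - q
  L_three : ∀ q, L 3 q =
    q ^ 9 - (q ^ 3 - 1) * (q ^ 3 - q) * (q ^ 3 - q ^ 2) - q ^ 2 * (q - 1) ^ 5
  U_three : ∀ q, U 3 q =
    q ^ 9 - (q ^ 3 - 1) * (q ^ 3 - q) * (q ^ 3 - q ^ 2) - q ^ 2 * (q - 1) ^ 5
  N0_two : ∀ q, N0 2 q = 1
  N0_eq : ∀ n, 4 ≤ n → ∀ q, N0 (n - 1) q =
    1 + ∑ k ∈ Finset.Icc 1 (n - 3),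
      ((n - 1).choose (n - k - 2) : ℤ) ^ 2 * q ^ (2 * (n - k - 2) * (k + 1)) *
        (q ^ ((n - k - 2) ^ 2) - L (n - k - 2) q)
  N1_eq : ∀ n, 4 ≤ n → ∀ q, N1 (n - 1) q =
    (q ^ ((n - 1) ^ 2 - 1) - (q - 3) ^ ((n - 1) ^ 2 - 1)) +
      N0 (n - 2) q * q ^ (2 * (n - 2) + 1) +
      q * U (n - 2) q * vAux q (n - 2) 1
  L_eq : ∀ n, 4 ≤ n → ∀ q, L n q =
    (q ^ ((n - 1) ^ 2) - U (n - 1) q) * q ^ (2 * (n - 1))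
  U_eq : ∀ n, 4 ≤ n → ∀ q, U n q =
    (q ^ ((n - 1) ^ 2) - L (n - 1) q) * q ^ (2 * (n - 1)) +
      q * N0 (n - 1) q * vAux q (n - 1) 0 +
      q * N1 (n - 1) q * vAux q (n - 1) 1 +
      q * U (n - 1) q * vAux q (n - 1) 2

theorem isBigO_L_three_sub_pow_eight :
    (fun q : ℤ => (q ^ 9 - (q ^ 3 - 1) * (q ^ 3 - q) * (q ^ 3 - q ^ 2) - q ^ 2 * (q - 1) ^ 5)
      - q ^ 8) =O[𝓟 (Ici 2)] (· ^ 7) := by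
  have hmono (c : ℤ) {k : ℕ} (hk : k ≤ 7) : (fun q : ℤ => c * q ^ k) =O[𝓟 (Ici 2)] (· ^ 7) :=
    (isBigO_const_pow c 0).mul_pow (isBigO_pow_pow le_rfl) (by omega)
  refine ((((hmono 5 (k := 6) (by norm_num)).sub (hmono 11 (k := 5) (by norm_num))).add
    (hmono 9 (k := 4) (by norm_num))).sub (hmono 4 (k := 3) (by norm_num))).add
    (hmono 1 (k := 2) (by norm_num)) |>.congr_left fun q => by ring

namespace LowerUpperRecursion

variable {L U N0 N1 : ℕ → ℤ → ℤ}

theorem isBigO_N0 (h : LowerUpperRecursion L U N0 N1) {m : ℕ} (hm : 2 ≤ m)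
    (hL : ∀ i, 1 ≤ i → i < m → L i =O[𝓟 (Ici 2)] (· ^ i ^ 2)) :
    N0 m =O[𝓟 (Ici 2)] (· ^ (m ^ 2 - 2)) := by
  obtain rfl | hm := hm.eq_or_lt
  · exact (isBigO_const_pow 1 _).congr_left fun q => (h.N0_two q).symm
  have hN0 : N0 m = fun q => 1 + ∑ k ∈ Finset.Icc 1 (m + 1 - 3),
      (m.choose (m + 1 - k - 2) : ℤ) ^ 2 * q ^ (2 * (m + 1 - k - 2) * (k + 1)) *
        (q ^ ((m + 1 - k - 2) ^ 2) - L (m + 1 - k - 2) q) :=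
    funext (h.N0_eq (m + 1) (by omega))
  rw [hN0]
  refine (isBigO_const_pow 1 _).add ?_
  refine (IsBigO.sum fun k hk => ?_).congr_left fun q => Finset.sum_apply q _ _
  rw [Finset.mem_Icc] at hk
  obtain ⟨i, hi⟩ : ∃ i, m + 1 - k - 2 = i := ⟨_, rfl⟩
  obtain rfl : m = i + (k + 1) := by omega
  simp only [hi]
  refine ((isBigO_const_pow _ 0).mul_pow (isBigO_pow_pow le_rfl) le_rfl).mul_pow
    ((isBigO_pow_pow le_rfl).sub (hL i (by omega) (by omega))) ?_
  have : 4 ≤ (k + 1) ^ 2 := Nat.pow_le_pow_left (by omega : 2 ≤ k + 1) 2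
  rw [add_sq]
  omega

theorem isBigO_N1 (h : LowerUpperRecursion L U N0 N1) {m : ℕ} (hm : 2 ≤ m)
    (hN0 : N0 m =O[𝓟 (Ici 2)] (· ^ (m ^ 2 - 2))) (hU : U m =O[𝓟 (Ici 2)] (· ^ (m ^ 2 - 1))) :
    N1 (m + 1) =O[𝓟 (Ici 2)] (· ^ ((m + 1) ^ 2 - 1)) := by
  have hN1 : N1 (m + 1) = fun q => (q ^ ((m + 1) ^ 2 - 1) - (q - 3) ^ ((m + 1) ^ 2 - 1)) +
      N0 m q * q ^ (2 * m + 1) + q * U m q * vAux q m 1 := by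
    funext q
    simpa using h.N1_eq (m + 2) (by omega) q
  have : 4 ≤ m ^ 2 := Nat.pow_le_pow_left hm 2
  rw [hN1]
  refine (((isBigO_pow_pow le_rfl).sub (isBigO_sub_const_pow 3 _)).add
    (hN0.mul_pow (isBigO_pow_pow le_rfl) ?_)).add
    ((isBigO_id_pow_one.mul_pow hU le_rfl).mul_pow (isBigO_vAux m 1) ?_) <;>
  · rw [add_sq]
    omega

theorem isBigO_U_succ_sub_pow (h : LowerUpperRecursion L U N0 N1) {m : ℕ} (hm : 3 ≤ m)
    (hL : L m =O[𝓟 (Ici 2)] (· ^ (m ^ 2 - 1))) (hN0 : N0 m =O[𝓟 (Ici 2)] (· ^ (m ^ 2 - 2)))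
    (hN1 : N1 m =O[𝓟 (Ici 2)] (· ^ (m ^ 2 - 1))) (hU : U m =O[𝓟 (Ici 2)] (· ^ (m ^ 2 - 1))) :
    (fun q => U (m + 1) q - q ^ ((m + 1) ^ 2 - 1)) =O[𝓟 (Ici 2)] (· ^ ((m + 1) ^ 2 - 2)) := by
  have hexp : (m + 1) ^ 2 - 1 = m ^ 2 + 2 * m := by rw [add_sq]; omega
  have hUsub : (fun q => U (m + 1) q - q ^ ((m + 1) ^ 2 - 1)) = fun q =>
      -(L m q * q ^ (2 * m)) + q * N0 m q * vAux q m 0 + q * N1 m q * vAux q m 1 +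
        q * U m q * vAux q m 2 := by
    funext q
    rw [h.U_eq (m + 1) (by omega) q, hexp, pow_add]
    simp only [add_tsub_cancel_right]
    ring
  have : 9 ≤ m ^ 2 := Nat.pow_le_pow_left hm 2
  rw [hUsub]
  refine (((hL.mul_pow (isBigO_pow_pow le_rfl) ?_).neg_left.add
    ((isBigO_id_pow_one.mul_pow hN0 le_rfl).mul_pow (isBigO_vAux m 0) ?_)).add
    ((isBigO_id_pow_one.mul_pow hN1 le_rfl).mul_pow (isBigO_vAux m 1) ?_)).add
    ((isBigO_id_pow_one.mul_pow hU le_rfl).mul_pow (isBigO_vAux m 2) ?_) <;>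
  · rw [add_sq]
    omega

theorem isBigO_L_succ (h : LowerUpperRecursion L U N0 N1) {m : ℕ} (hm : 3 ≤ m)
    (hU : U m =O[𝓟 (Ici 2)] (· ^ m ^ 2)) :
    L (m + 1) =O[𝓟 (Ici 2)] (· ^ ((m + 1) ^ 2 - 1)) := by
  refine (((isBigO_pow_pow le_rfl).sub hU).mul_pow (isBigO_pow_pow le_rfl) ?_).congr_left
    fun q => (h.L_eq (m + 1) (by omega) q).symm
  rw [add_sq]
  omega

theorem isBigO_L_succ_sub (h : LowerUpperRecursion L U N0 N1) {m : ℕ} (hm : 3 ≤ m)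
    (hU : (fun q => U m q - q ^ (m ^ 2 - 1)) =O[𝓟 (Ici 2)] (· ^ (m ^ 2 - 2))) :
    (fun q => L (m + 1) q - (q ^ ((m + 1) ^ 2 - 1) - q ^ ((m + 1) ^ 2 - 2))) =O[𝓟 (Ici 2)]
      (· ^ ((m + 1) ^ 2 - 3)) := by
  have h9 : 9 ≤ m ^ 2 := Nat.pow_le_pow_left hm 2
  obtain ⟨t, ht⟩ : ∃ t, m ^ 2 = t + 2 := ⟨m ^ 2 - 2, by omega⟩
  have hsq : (m + 1) ^ 2 = t + 2 * m + 3 := by rw [add_sq, ht]; ring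
  rw [ht] at hU
  rw [hsq]
  simp only [Nat.add_sub_cancel, Nat.reduceSubDiff] at hU ⊢
  refine (hU.neg_left.mul_pow (isBigO_pow_pow (le_refl (2 * m))) le_rfl).congr_left fun q => ?_
  rw [h.L_eq (m + 1) (by omega) q, add_tsub_cancel_right, ht]
  ring

theorem isBigO_U_three_sub_pow (h : LowerUpperRecursion L U N0 N1) :
    (fun q => U 3 q - q ^ (3 ^ 2 - 1)) =O[𝓟 (Ici 2)] (· ^ (3 ^ 2 - 2)) :=
  isBigO_L_three_sub_pow_eight.congr_left fun q => by rw [h.U_three]; rfl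

theorem isBigO_L (h : LowerUpperRecursion L U N0 N1) {i : ℕ} (hi : 1 ≤ i)
    (hU : ∀ j, 3 ≤ j → j < i →
      (fun q => U j q - q ^ (j ^ 2 - 1)) =O[𝓟 (Ici 2)] (· ^ (j ^ 2 - 2))) :
    L i =O[𝓟 (Ici 2)] (· ^ (i ^ 2 - 1)) := by
  match i, hi with
  | 1, _ => exact (isBigO_zero _ _).congr_left fun q => (h.L_one q).symm
  | 2, _ => exact (isBigO_zero _ _).congr_left fun q => (h.L_two q).symm
  | 3, _ =>
    exact isBigO_of_isBigO_sub_pow (isBigO_L_three_sub_pow_eight.congr_left fun q => by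
      rw [h.L_three]; rfl) (by norm_num)
  | m + 4, _ =>
    exact h.isBigO_L_succ (by omega) <|
      (isBigO_of_isBigO_sub_pow (hU (m + 3) (by omega) (by omega)) (by omega)).trans
        (isBigO_pow_pow (Nat.sub_le _ _))

theorem isBigO_U (h : LowerUpperRecursion L U N0 N1) {m : ℕ} (hm : 2 ≤ m)
    (hU : 3 ≤ m → (fun q => U m q - q ^ (m ^ 2 - 1)) =O[𝓟 (Ici 2)] (· ^ (m ^ 2 - 2))) :
    U m =O[𝓟 (Ici 2)] (· ^ (m ^ 2 - 1)) := by
  obtain rfl | hm := hm.eq_or_lt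
  · refine (((isBigO_pow_pow (k := 3) (by norm_num)).add
      (isBigO_pow_pow (k := 2) (by norm_num))).sub (isBigO_pow_pow (k := 1) (by norm_num)))
      |>.congr_left fun q => ?_
    rw [h.U_two, pow_one]
  · exact isBigO_of_isBigO_sub_pow (hU hm) (by omega)

theorem isBigO_U_sub_pow (h : LowerUpperRecursion L U N0 N1) {m : ℕ} (hm : 3 ≤ m) :
    (fun q => U m q - q ^ (m ^ 2 - 1)) =O[𝓟 (Ici 2)] (· ^ (m ^ 2 - 2)) := by
  induction m using Nat.strong_induction_on with
  | _ m ih =>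
  obtain rfl | hm := hm.eq_or_lt
  · exact h.isBigO_U_three_sub_pow
  obtain ⟨j, rfl⟩ : ∃ j, m = j + 2 := ⟨m - 2, by omega⟩
  have hL (i : ℕ) (hi : 1 ≤ i) (hij : i ≤ j + 1) : L i =O[𝓟 (Ici 2)] (· ^ (i ^ 2 - 1)) :=
    h.isBigO_L hi fun l hl hli => ih l (by omega) hl
  have hN0 (i : ℕ) (hi : 2 ≤ i) (hij : i ≤ j + 1) : N0 i =O[𝓟 (Ici 2)] (· ^ (i ^ 2 - 2)) :=
    h.isBigO_N0 hi fun l hl hli => (hL l hl (by omega)).trans (isBigO_pow_pow (Nat.sub_le _ _))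
  have hU (i : ℕ) (hi : 2 ≤ i) (hij : i ≤ j + 1) : U i =O[𝓟 (Ici 2)] (· ^ (i ^ 2 - 1)) :=
    h.isBigO_U hi fun hi3 => ih i (by omega) hi3
  exact h.isBigO_U_succ_sub_pow (by omega) (hL _ (by omega) le_rfl) (hN0 _ (by omega) le_rfl)
    (h.isBigO_N1 (by omega) (hN0 j (by omega) (by omega)) (hU j (by omega) (by omega)))
    (hU _ (by omega) le_rfl)

end LowerUpperRecursion

theorem lower_bound_asymptotics_general
    (L U N0 N1 : ℕ → ℤ → ℤ)
    (hL1 : ∀ q, L 1 q = 0) (hL2 : ∀ q, L 2 q = 0)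
    (hU2 : ∀ q, U 2 q = q ^ 3 + q ^ 2 - q)
    (hL3 : ∀ q, L 3 q =
      q ^ 9 - (q ^ 3 - 1) * (q ^ 3 - q) * (q ^ 3 - q ^ 2) - q ^ 2 * (q - 1) ^ 5)
    (hU3 : ∀ q, U 3 q =
      q ^ 9 - (q ^ 3 - 1) * (q ^ 3 - q) * (q ^ 3 - q ^ 2) - q ^ 2 * (q - 1) ^ 5)
    (hN0two : ∀ q, N0 2 q = 1)
    (hN0 : ∀ n, 4 ≤ n → ∀ q, N0 (n - 1) q =
      1 + ∑ k ∈ Finset.Icc 1 (n - 3),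
        ((n - 1).choose (n - k - 2) : ℤ) ^ 2 * q ^ (2 * (n - k - 2) * (k + 1)) *
          (q ^ ((n - k - 2) ^ 2) - L (n - k - 2) q))
    (hN1 : ∀ n, 4 ≤ n → ∀ q, N1 (n - 1) q =
      (q ^ ((n - 1) ^ 2 - 1) - (q - 3) ^ ((n - 1) ^ 2 - 1)) +
        N0 (n - 2) q * q ^ (2 * (n - 2) + 1) +
        q * U (n - 2) q * vAux q (n - 2) 1)
    (hL : ∀ n, 4 ≤ n → ∀ q, L n q =
      (q ^ ((n - 1) ^ 2) - U (n - 1) q) * q ^ (2 * (n - 1)))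
    (hU : ∀ n, 4 ≤ n → ∀ q, U n q =
      (q ^ ((n - 1) ^ 2) - L (n - 1) q) * q ^ (2 * (n - 1)) +
        q * N0 (n - 1) q * vAux q (n - 1) 0 +
        q * N1 (n - 1) q * vAux q (n - 1) 1 +
        q * U (n - 1) q * vAux q (n - 1) 2)
    (n : ℕ) (hn : 4 ≤ n) :
    ∃ C : ℤ, ∀ q : ℤ, 2 ≤ q →
      |L n q - (q ^ (n ^ 2 - 1) - q ^ (n ^ 2 - 2))| ≤ C * q ^ (n ^ 2 - 3) := by
  have h : LowerUpperRecursion L U N0 N1 := ⟨hL1, hL2, hU2, hL3, hU3, hN0two, hN0, hN1, hL, hU⟩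
  obtain ⟨m, rfl⟩ : ∃ m, n = m + 1 := ⟨n - 1, by omega⟩
  exact exists_int_bound_of_isBigO (h.isBigO_L_succ_sub (by omega) (h.isBigO_U_sub_pow (by omega)))

/-- For every `n ≥ 4` there is a constant `C` such that for all integers `q ≥ 2`,
`|𝔏ₙ(q) − (q^{n²−1} − q^{n²−2})| ≤ C q^{n²−3}`. -/
theorem lower_bound_asymptotics
    (L U N0 N1 : ℕ → ℤ → ℤ)
    (hL1 : ∀ q, L 1 q = 0) (hL2 : ∀ q, L 2 q = 0)
    (hU1 : ∀ q, U 1 q = 1) (hU2 : ∀ q, U 2 q = q ^ 3 + q ^ 2 - q)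
    (hL3 : ∀ q, L 3 q =
      q ^ 9 - (q ^ 3 - 1) * (q ^ 3 - q) * (q ^ 3 - q ^ 2) - q ^ 2 * (q - 1) ^ 5)
    (hU3 : ∀ q, U 3 q =
      q ^ 9 - (q ^ 3 - 1) * (q ^ 3 - q) * (q ^ 3 - q ^ 2) - q ^ 2 * (q - 1) ^ 5)
    (hN0two : ∀ q, N0 2 q = 1)
    (hN0 : ∀ n, 4 ≤ n → ∀ q, N0 (n - 1) q =
      1 + ∑ k ∈ Finset.Icc 1 (n - 3),
        ((n - 1).choose (n - k - 2) : ℤ) ^ 2 * q ^ (2 * (n - k - 2) * (k + 1)) *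
          (q ^ ((n - k - 2) ^ 2) - L (n - k - 2) q))
    (hN1 : ∀ n, 4 ≤ n → ∀ q, N1 (n - 1) q =
      (q ^ ((n - 1) ^ 2 - 1) - (q - 3) ^ ((n - 1) ^ 2 - 1)) +
        N0 (n - 2) q * q ^ (2 * (n - 2) + 1) +
        q * U (n - 2) q * vAux q (n - 2) 1)
    (hL : ∀ n, 4 ≤ n → ∀ q, L n q =
      (q ^ ((n - 1) ^ 2) - U (n - 1) q) * q ^ (2 * (n - 1)))
    (hU : ∀ n, 4 ≤ n → ∀ q, U n q =
      (q ^ ((n - 1) ^ 2) - L (n - 1) q) * q ^ (2 * (n - 1)) +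
        q * N0 (n - 1) q * vAux q (n - 1) 0 +
        q * N1 (n - 1) q * vAux q (n - 1) 1 +
        q * U (n - 1) q * vAux q (n - 1) 2)
    (n : ℕ) (hn : 4 ≤ n) :
    ∃ C : ℤ, ∀ q : ℤ, 2 ≤ q →
      |L n q - (q ^ (n ^ 2 - 1) - q ^ (n ^ 2 - 2))| ≤ C * q ^ (n ^ 2 - 3) :=
  lower_bound_asymptotics_general L U N0 N1 hL1 hL2 hU2 hL3 hU3 hN0two hN0 hN1 hL hU n hn
end

section
/- Let F be an infinite field with char F ≠ 2 and let n ≥ 2. Then for all λ, μ ∈ F, the set Ω_n(λ, μ) = {A ∈ M_n(F) : per A = λ and det A = μ} has the same cardinality as F. -/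
/-!
As `2` is invertible, write `λ = a + b` and `μ = a - b`. For `t ≠ 0` the matrix
`[[t, b / t], [t, a / t]]` has permanent `a + b` and determinant `a - b`; completed by an identity
block it gives an injective map `F \ {0} → Ωₙ(λ, μ)`, so `#F = #(F \ {0}) ≤ #Ωₙ(λ, μ) ≤ #Mₙ(F) = #F`.
-/

open Equiv Matrix Cardinal

universe u v

theorem Cardinal.mk_matrix_of_infinite (m n : Type v) [Fintype m] [Fintype n] [Nonempty m]
    [Nonempty n] (F : Type u) [Infinite F] : #(Matrix m n F) = lift.{v} #F := by
  rw [show #(Matrix m n F) = #(m × n → F) from mk_congr (Equiv.curry m n F).symm, mk_arrow,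
    mk_fintype (m × n), lift_natCast, power_natCast,
    power_nat_eq (aleph0_le_lift.2 (aleph0_le_mk F)) Fintype.card_pos]

namespace Matrix

variable {R : Type*} [CommSemiring R]
variable {m n : Type*} [DecidableEq m] [Fintype m] [DecidableEq n] [Fintype n]

theorem permanent_submatrix_equiv_self (e : n ≃ m) (A : Matrix m m R) :
    (A.submatrix e e).permanent = A.permanent := by
  refine Fintype.sum_equiv (permCongr e) _ _ fun σ => ?_
  refine Fintype.prod_equiv e _ _ fun i => ?_
  simp [permCongr_apply]

theorem permanent_fromBlocks_zero₂₁ (A : Matrix m m R) (B : Matrix m n R) (D : Matrix n n R) :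
    (fromBlocks A B 0 D).permanent = A.permanent * D.permanent := by
  rw [permanent, permanent, permanent, Finset.sum_mul_sum, ← Fintype.sum_prod_type']
  symm
  refine Finset.sum_of_injOn (fun p => Perm.sumCongr p.1 p.2)
    (Perm.sumCongrHom_injective.injOn) (fun _ _ => by simp) ?_ fun p _ => ?_
  · intro σ _ hσ
    obtain ⟨a, b, hab⟩ : ∃ a b, σ (Sum.inl a) = Sum.inr b := by
      by_contra! h
      refine hσ ?_
      obtain ⟨p, rfl⟩ := Perm.mem_sumCongrHom_range_of_perm_mapsTo_inl (σ := σ) <| by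
        rintro _ ⟨a, rfl⟩
        rcases hσa : σ (Sum.inl a) with c | b
        · exact ⟨c, rfl⟩
        · exact absurd hσa (h a b)
      exact ⟨p, by simp, rfl⟩
    exact Finset.prod_eq_zero (Finset.mem_univ (Sum.inl a)) (by simp [hab])
  · simp [Fintype.prod_sum_type]

theorem permanent_fin_two (A : Matrix (Fin 2) (Fin 2) R) :
    A.permanent = A 0 0 * A 1 1 + A 0 1 * A 1 0 := by
  have : (Finset.univ : Finset (Perm (Fin 2))) = {1, Equiv.swap 0 1} := by decide
  rw [permanent, this, Finset.sum_pair (by decide)]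
  simp [mul_comm]

end Matrix

section Witness

variable {F : Type*} [Field F]

def omegaWitness (k : ℕ) (a b t : F) : Matrix (Fin (2 + k)) (Fin (2 + k)) F :=
  (fromBlocks !![t, b / t; t, a / t] 0 0 1).submatrix finSumFinEquiv.symm finSumFinEquiv.symm

theorem permanent_omegaWitness (k : ℕ) (a b : F) {t : F} (ht : t ≠ 0) :
    (omegaWitness k a b t).permanent = a + b := by
  rw [omegaWitness, permanent_submatrix_equiv_self, permanent_fromBlocks_zero₂₁, permanent_one,
    mul_one, permanent_fin_two]
  simp [ht, mul_div_cancel₀]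

theorem det_omegaWitness (k : ℕ) (a b : F) {t : F} (ht : t ≠ 0) :
    (omegaWitness k a b t).det = a - b := by
  rw [omegaWitness, det_submatrix_equiv_self, det_fromBlocks_zero₂₁, det_one, mul_one, det_fin_two]
  simp [ht, mul_div_cancel₀]

theorem omegaWitness_injective (k : ℕ) (a b : F) : Function.Injective (omegaWitness k a b) :=
  fun s t h => by simpa [omegaWitness] using congrFun₂ h (Fin.castAdd k 0) (Fin.castAdd k 0)

end Witness

/-- Over an infinite field `F` with `char F ≠ 2` and for `n ≥ 2`, the set
`Ωₙ(λ, μ) = {A ∈ Mₙ(F) : per A = λ, det A = μ}` has the same cardinality as `F`,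
for every `λ, μ ∈ F`. -/
theorem card_Omega_eq_card_field (F : Type*) [Field F] [Infinite F]
    (hch : ringChar F ≠ 2) (n : ℕ) (hn : 2 ≤ n) (lam mu : F) :
    Cardinal.mk {A : Matrix (Fin n) (Fin n) F // A.permanent = lam ∧ A.det = mu} =
      Cardinal.mk F := by
  refine le_antisymm ?_ ?_
  · have : Nonempty (Fin n) := ⟨⟨0, by omega⟩⟩
    simpa using (mk_subtype_le _).trans (mk_matrix_of_infinite (Fin n) (Fin n) F).le
  have h2 : (2 : F) ≠ 0 := Ring.two_ne_zero hch
  obtain ⟨a, b, rfl, rfl⟩ : ∃ a b : F, a + b = lam ∧ a - b = mu :=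
    ⟨(lam + mu) / 2, (lam - mu) / 2, by field_simp; ring, by field_simp; ring⟩
  obtain ⟨k, rfl⟩ := Nat.exists_eq_add_of_le hn
  rw [← mk_compl_finset_of_infinite {0}]
  refine mk_le_of_injective (f := fun t => ⟨omegaWitness k a b t,
    permanent_omegaWitness k a b (by simpa using t.2), det_omegaWitness k a b (by simpa using t.2)⟩)
    fun s t h => Subtype.ext (omegaWitness_injective k a b (congrArg Subtype.val h))
end

section
/- Let F be an infinite field and let n ≥ 2. Then there exists a bijective map Φ : M_n(F) → M_n(F) such that per A = det Φ(A) and det A = per Φ(A) for all A ∈ M_n(F). -/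
open Equiv Finset Matrix Cardinal

namespace PerDetAux

variable {F : Type*} [Field F] {m : ℕ}

/-- Auxiliary matrix: identity except the upper-left corner. -/
def aux (m : ℕ) (x y t : F) : Matrix (Fin (m + 2)) (Fin (m + 2)) F :=
  fun i j =>
    if i = 0 ∧ j = 0 then x
    else if i = 0 ∧ j = 1 then y
    else if i = 1 ∧ j = 0 then t
    else if i = 1 ∧ j = 1 then t
    else if i = j then 1 else 0

lemma prod_fin (f : Fin (m + 2) → F) (h : ∀ i, i ≠ 0 → i ≠ 1 → f i = 1) :
    ∏ i, f i = f 0 * f 1 := by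
  rw [← Finset.mul_prod_erase univ f (mem_univ 0),
      ← Finset.mul_prod_erase _ f
        (Finset.mem_erase.2 ⟨(one_ne_zero : (1 : Fin (m+2)) ≠ 0), mem_univ 1⟩),
      Finset.prod_eq_one fun i hi => h i (Finset.mem_erase.1 (Finset.mem_erase.1 hi).2).1
        (Finset.mem_erase.1 hi).1, mul_one]

lemma one_ne_swap : (1 : Perm (Fin (m+2))) ≠ Equiv.swap 0 1 := by
  intro h
  have h2 := Equiv.swap_apply_left (0 : Fin (m+2)) 1
  rw [← h] at h2
  simp only [Perm.one_apply] at h2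
  exact (zero_ne_one : (0 : Fin (m+2)) ≠ 1) h2

lemma sum_perm_eq (g : Perm (Fin (m+2)) → F)
    (hg : ∀ σ, σ ≠ 1 → σ ≠ Equiv.swap 0 1 → g σ = 0) :
    ∑ σ : Perm (Fin (m+2)), g σ = g 1 + g (Equiv.swap 0 1) := by
  rw [← Finset.sum_subset (Finset.subset_univ {1, Equiv.swap 0 1}) (fun σ _ hσ => by
      simp only [Finset.mem_insert, Finset.mem_singleton] at hσ
      push_neg at hσ
      exact hg σ hσ.1 hσ.2),
    Finset.sum_pair one_ne_swap]

lemma prod_aux_eq_zero (x y t : F) (σ : Perm (Fin (m+2))) (h1 : σ ≠ 1)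
    (h2 : σ ≠ Equiv.swap 0 1) : ∏ i, aux m x y t (σ i) i = 0 := by
  by_cases hfix : ∀ i, i ≠ 0 → i ≠ 1 → σ i = i
  · exfalso
    have key : ∀ j : Fin (m+2), j = 0 ∨ j = 1 → σ j = 0 ∨ σ j = 1 := by
      rintro j hj
      by_contra hc
      push_neg at hc
      have hfj : σ j = j := σ.injective (hfix (σ j) hc.1 hc.2)
      rcases hj with rfl | rfl
      · exact hc.1 hfj
      · exact hc.2 hfj
    have hne : (0 : Fin (m+2)) ≠ 1 := zero_ne_one
    rcases key 0 (Or.inl rfl) with ha | ha <;> rcases key 1 (Or.inr rfl) with hb | hb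
    · exact hne (σ.injective (ha.trans hb.symm))
    · exact h1 (Equiv.ext fun i => by
        rcases eq_or_ne i 0 with rfl | hi0
        · simpa using ha
        · rcases eq_or_ne i 1 with rfl | hi1
          · simpa using hb
          · simpa using hfix i hi0 hi1)
    · exact h2 (Equiv.ext fun i => by
        rcases eq_or_ne i 0 with rfl | hi0
        · rw [Equiv.swap_apply_left]; exact ha
        · rcases eq_or_ne i 1 with rfl | hi1
          · rw [Equiv.swap_apply_right]; exact hb
          · rw [Equiv.swap_apply_of_ne_of_ne hi0 hi1]; exact hfix i hi0 hi1)
    · exact hne (σ.injective (ha.trans hb.symm))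
  · push_neg at hfix
    obtain ⟨i, hi0, hi1, hne⟩ := hfix
    exact Finset.prod_eq_zero (Finset.mem_univ i) (by simp [aux, hi0, hi1, hne])


lemma aux_00 (x y t : F) : aux m x y t 0 0 = x := by simp [aux]
lemma aux_11 (x y t : F) : aux m x y t 1 1 = t := by
  simp [aux, (one_ne_zero : (1 : Fin (m+2)) ≠ 0)]
lemma aux_10 (x y t : F) : aux m x y t 1 0 = t := by
  simp [aux, (one_ne_zero : (1 : Fin (m+2)) ≠ 0)]
lemma aux_01 (x y t : F) : aux m x y t 0 1 = y := by
  simp [aux, (zero_ne_one : (0 : Fin (m+2)) ≠ 1)]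

lemma prod_aux_one (x y t : F) : ∏ i, aux m x y t ((1 : Perm (Fin (m+2))) i) i = x * t := by
  simp only [Perm.one_apply]
  rw [prod_fin _ fun i hi0 hi1 => by simp [aux, hi0, hi1], aux_00, aux_11]

lemma prod_aux_swap (x y t : F) :
    ∏ i, aux m x y t (Equiv.swap 0 1 i) i = t * y := by
  rw [prod_fin _ fun i hi0 hi1 => by
      rw [Equiv.swap_apply_of_ne_of_ne hi0 hi1]; simp [aux, hi0, hi1],
    Equiv.swap_apply_left, Equiv.swap_apply_right, aux_10, aux_01]

lemma det_aux (x y t : F) : (aux m x y t).det = x * t - y * t := by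
  rw [Matrix.det_apply',
    sum_perm_eq _ fun σ hσ1 hσ2 => by rw [prod_aux_eq_zero x y t σ hσ1 hσ2, mul_zero],
    prod_aux_one, prod_aux_swap, Equiv.Perm.sign_one,
    Equiv.Perm.sign_swap (zero_ne_one : (0 : Fin (m+2)) ≠ 1)]
  push_cast
  ring

lemma per_aux (x y t : F) : (aux m x y t).permanent = x * t + y * t := by
  rw [Matrix.permanent,
    sum_perm_eq _ fun σ hσ1 hσ2 => prod_aux_eq_zero x y t σ hσ1 hσ2,
    prod_aux_one, prod_aux_swap]
  ring

lemma permanent_eq_det_of_char_two (h2 : (2 : F) = 0) {k : ℕ}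
    (A : Matrix (Fin k) (Fin k) F) : A.permanent = A.det := by
  rw [Matrix.det_apply', Matrix.permanent]
  refine Finset.sum_congr rfl fun σ _ => ?_
  have hs : ((Equiv.Perm.sign σ : ℤ) : F) = 1 := by
    rcases Int.units_eq_one_or (Equiv.Perm.sign σ) with h | h <;> rw [h] <;> push_cast
    · rfl
    · have : (1 : F) + 1 = 0 := by rw [one_add_one_eq_two]; exact h2
      linear_combination -this
  rw [hs, one_mul]


/-- Gluing fiberwise equivalences into a global bijection intertwining `f` and `e`. -/
lemma glue {α β : Type*} (f : α → β) (e : β ≃ β)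
    (g : ∀ b, {a // f a = b} ≃ {a // f a = e b}) :
    ∃ Φ : α → α, Function.Bijective Φ ∧ ∀ a, f (Φ a) = e (f a) := by
  let Φe : α ≃ α :=
    (Equiv.sigmaFiberEquiv f).symm.trans
      ((Equiv.sigmaCongrRight g).trans
        ((Equiv.sigmaCongrLeft (β := fun b => {a // f a = b}) e).trans
          (Equiv.sigmaFiberEquiv f)))
  refine ⟨Φe, Φe.bijective, fun a => ?_⟩
  exact ((g (f a)) ⟨a, rfl⟩).2

universe u

lemma card_matrix (F : Type u) [Infinite F] (k : ℕ) (hk : 1 ≤ k) :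
    #(Matrix (Fin k) (Fin k) F) = #F := by
  have e1 : Matrix (Fin k) (Fin k) F ≃ (Fin k × Fin k → F) :=
    (Equiv.refl (Fin k → Fin k → F)).trans (Equiv.curry _ _ _).symm
  rw [mk_congr e1, Cardinal.mk_arrow, Cardinal.lift_uzero, Cardinal.mk_fintype (Fin k × Fin k),
    Fintype.card_prod, Fintype.card_fin, Cardinal.lift_natCast, Cardinal.power_natCast,
    Cardinal.power_nat_eq (Cardinal.aleph0_le_mk F) (Nat.one_le_iff_ne_zero.2 (by positivity))]

lemma card_ne_zero (F : Type u) [Field F] [Infinite F] : #{t : F // t ≠ 0} = #F := by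
  have h := Cardinal.mk_compl_of_infinite ({0} : Set F)
    (by rw [Cardinal.mk_singleton]; exact Cardinal.one_lt_aleph0.trans_le (Cardinal.aleph0_le_mk F))
  rw [← h]
  exact mk_congr (Equiv.subtypeEquivRight (by simp))

variable [Infinite F]

lemma fiber_card (h2 : (2 : F) ≠ 0) (d p : F) :
    #{A : Matrix (Fin (m+2)) (Fin (m+2)) F // (A.det, A.permanent) = (d, p)} = #F := by
  refine le_antisymm ((Cardinal.mk_subtype_le _).trans
    (card_matrix F (m+2) (by omega)).le) ?_
  rw [← card_ne_zero F]
  refine Cardinal.mk_le_of_injective (f := fun t =>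
    (⟨aux m ((d + p) / (2 * t.1)) ((p - d) / (2 * t.1)) t.1, ?_⟩ :
      {A : Matrix (Fin (m+2)) (Fin (m+2)) F // (A.det, A.permanent) = (d, p)})) ?_
  · have ht : (t.1 : F) ≠ 0 := t.2
    rw [Prod.mk.injEq, det_aux, per_aux]
    constructor <;> field_simp <;> ring
  · intro t s h
    have := congrArg (fun A : {A : Matrix (Fin (m+2)) (Fin (m+2)) F //
      (A.det, A.permanent) = (d, p)} => A.1 1 0) h
    simpa only [aux_10, Subtype.ext_iff] using this

end PerDetAux

/-- Over an infinite field `F` and for `n ≥ 2`, there exists a bijection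
`Φ : Mₙ(F) → Mₙ(F)` exchanging the permanent and the determinant:
`per A = det (Φ A)` and `det A = per (Φ A)` for all `A`. -/
theorem exists_bijective_exchanging_permanent_and_det (F : Type*) [Field F] [Infinite F]
    (n : ℕ) (hn : 2 ≤ n) :
    ∃ Φ : Matrix (Fin n) (Fin n) F → Matrix (Fin n) (Fin n) F,
      Function.Bijective Φ ∧
        ∀ A, A.permanent = (Φ A).det ∧ A.det = (Φ A).permanent := by
  obtain ⟨m, rfl⟩ : ∃ m, n = m + 2 := ⟨n - 2, by omega⟩
  by_cases h2 : (2 : F) = 0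
  · exact ⟨id, Function.bijective_id, fun A =>
      ⟨PerDetAux.permanent_eq_det_of_char_two h2 A,
       (PerDetAux.permanent_eq_det_of_char_two h2 A).symm⟩⟩
  · have hg : ∀ b : F × F,
        Nonempty ({A : Matrix (Fin (m+2)) (Fin (m+2)) F // (A.det, A.permanent) = b} ≃
          {A : Matrix (Fin (m+2)) (Fin (m+2)) F // (A.det, A.permanent) = (Equiv.prodComm F F) b}) :=
      fun b => Cardinal.eq.mp (by
        rw [show b = (b.1, b.2) from rfl, PerDetAux.fiber_card h2 b.1 b.2]
        exact (PerDetAux.fiber_card h2 b.2 b.1).symm)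
    obtain ⟨Φ, hbij, hΦ⟩ := PerDetAux.glue
      (fun A : Matrix (Fin (m+2)) (Fin (m+2)) F => (A.det, A.permanent))
      (Equiv.prodComm F F) (fun b => (hg b).some)
    refine ⟨Φ, hbij, fun A => ?_⟩
    have h := hΦ A
    simp only [Equiv.prodComm_apply, Prod.swap, Prod.mk.injEq] at h
    exact ⟨h.1.symm, h.2.symm⟩
end
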